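/- arXiv:2001.08537 — 8 statements merged into one kernel-verified Lean document; each statement's English description precedes it below -/
import Mathlib

section
/- Let Λ be a d×d real symmetric positive definite matrix and let s be an integer with 1 ≤ s ≤ d. Then: (a) for every d×d real symmetric positive semidefinite matrix X whose s-th largest eigenvalue is positive, log det^s(X) − tr(XΛ) ≤ −log det_s(Λ) − s; and (b) there exists a d×d real symmetric positive semidefinite matrix X attaining equality, so the supremum of log det^s(X) − tr(XΛ) over all positive semidefinite X equals −log det_s(Λ) − s. -/
open Matrix Finset

noncomputable section

/-- `lam` lists the eigenvalues (with multiplicity) of the real symmetric matrix `X`,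
via an orthogonal spectral decomposition. -/
def IsSpectralDecomp {m : Type*} [Fintype m] [DecidableEq m]
    (X : Matrix m m ℝ) (lam : m → ℝ) : Prop :=
  ∃ Q : Matrix m m ℝ, Q * Qᵀ = 1 ∧ X = Q * Matrix.diagonal lam * Qᵀ

/-- Principal submatrix `C_{S,S}`. -/
def subSub {n : ℕ} (C : Matrix (Fin n) (Fin n) ℝ) (S : Finset (Fin n)) :
    Matrix {i // i ∈ S} {i // i ∈ S} ℝ :=
  Matrix.of fun a b => C a.1 b.1

/-- The value `λ_{i+1}` (1-based), i.e. the coordinate of `lam` of 0-based index `i`;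
`0` when out of range. -/
def extVal {d : ℕ} (lam : Fin d → ℝ) : ℕ → ℝ :=
  fun i => if h : i < d then lam ⟨i, h⟩ else 0

/-- `∑_{i=k+1}^d λ_i` (1-based), i.e. the sum of the coordinates of 0-based index `≥ k`. -/
def tailSum {d : ℕ} (lam : Fin d → ℝ) (k : ℕ) : ℝ :=
  ∑ i ∈ Finset.univ.filter (fun i : Fin d => k ≤ (i : ℕ)), lam i

/-- `k = k(λ, s)`: an integer `0 ≤ k < s` with
`λ_k > (1/(s-k)) ∑_{i=k+1}^d λ_i ≥ λ_{k+1}`, with the convention `λ₀ = +∞`. -/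
def IsKIndex {d : ℕ} (lam : Fin d → ℝ) (s k : ℕ) : Prop :=
  k < s ∧ extVal lam k ≤ tailSum lam k / ((s : ℝ) - k) ∧
    (k = 0 ∨ tailSum lam k / ((s : ℝ) - k) < extVal lam (k - 1))

/-- `P` is the Moore–Penrose pseudoinverse of `X`. -/
def IsPseudoInv {d : ℕ} (X P : Matrix (Fin d) (Fin d) ℝ) : Prop :=
  X * P * X = X ∧ P * X * P = P ∧ (X * P)ᵀ = X * P ∧ (P * X)ᵀ = P * X


/-!
Write `X = R diag(λ) Rᵀ` and `Λ = Q diag(β) Qᵀ`. Then `tr(XΛ) = ∑ᵢⱼ λᵢ βⱼ wᵢⱼ`, where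
`wᵢⱼ = ((RᵀQ)ᵢⱼ)²` is doubly stochastic. With `cᵢ = ∑ⱼ wᵢⱼ βⱼ > 0`, the tangent-line bound
`log λᵢ ≤ λᵢ cᵢ - log cᵢ - 1` for the `s` largest eigenvalues reduces the claim to
`∑_{i<s} log cᵢ ≥ ∑_{j ≥ d-s} log βⱼ`. By Jensen, `log cᵢ ≥ ∑ⱼ wᵢⱼ log βⱼ`, and the column sums
`tⱼ = ∑_{i<s} wᵢⱼ` lie in `[0, 1]` and total `s`, so the bathtub principle bounds
`∑ⱼ tⱼ log βⱼ` below by the sum of the `s` smallest values `log βⱼ`. Equality holds for the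
matrix with eigenvalue `1/βⱼ` on the eigenvectors of the `s` smallest `βⱼ` and `0` elsewhere.
-/

theorem Finset.sum_le_sum_mul_of_le_of_ge {ι : Type*} [Fintype ι] [DecidableEq ι]
    (S : Finset ι) {a t : ι → ℝ} {m : ℝ}
    (haS : ∀ j ∈ S, a j ≤ m) (haSc : ∀ j ∉ S, m ≤ a j)
    (ht0 : ∀ j, 0 ≤ t j) (ht1 : ∀ j, t j ≤ 1) (hts : ∑ j, t j = #S) :
    ∑ j ∈ S, a j ≤ ∑ j, t j * a j := by
  have hS : ∑ j ∈ S, (a j - m) ≤ ∑ j ∈ S, t j * (a j - m) :=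
    sum_le_sum fun j hj => by nlinarith [haS j hj, ht1 j]
  have hSc : 0 ≤ ∑ j ∈ Sᶜ, t j * (a j - m) :=
    sum_nonneg fun j hj => mul_nonneg (ht0 j) (by linarith [haSc j (mem_compl.mp hj)])
  have hsplit := sum_add_sum_compl S fun j => t j * (a j - m)
  simp only [mul_sub, sum_sub_distrib, ← sum_mul, hts, sum_const, nsmul_eq_mul] at hS hSc hsplit
  linarith

theorem Fin.map_revPerm_filter_val_lt (d s : ℕ) :
    (univ.filter fun j : Fin d => (j : ℕ) < s).map Fin.revPerm.toEmbedding =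
      univ.filter (fun i : Fin d => d - s ≤ (i : ℕ)) := by
  ext i
  simp only [mem_map_equiv, Fin.revPerm_symm, Fin.revPerm_apply, mem_filter, mem_univ, Fin.val_rev,
    true_and]
  omega

theorem Fin.card_filter_sub_le_val {d s : ℕ} (hsd : s ≤ d) :
    #(univ.filter fun i : Fin d => d - s ≤ (i : ℕ)) = s := by
  rw [← Fin.map_revPerm_filter_val_lt, card_map, Fin.card_filter_val_lt, min_eq_right hsd]

theorem Antitone.sum_filter_sub_le_val_le_sum_mul {d s : ℕ} (hs1 : 1 ≤ s) (hsd : s ≤ d)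
    {a : Fin d → ℝ} (ha : Antitone a) {t : Fin d → ℝ}
    (ht0 : ∀ j, 0 ≤ t j) (ht1 : ∀ j, t j ≤ 1) (hts : ∑ j, t j = s) :
    ∑ j ∈ univ.filter (fun j : Fin d => d - s ≤ (j : ℕ)), a j ≤ ∑ j, t j * a j := by
  refine sum_le_sum_mul_of_le_of_ge _ (m := a ⟨d - s, by omega⟩) (fun j hj => ha ?_)
    (fun j hj => ha ?_) ht0 ht1 (by rw [hts, Fin.card_filter_sub_le_val hsd])
  · simpa [Fin.le_def] using hj
  · simp only [mem_filter, mem_univ, true_and, not_le] at hj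
    exact Fin.le_def.mpr hj.le

section Spectral

variable {m : Type*} [Fintype m] [DecidableEq m]

theorem Matrix.sum_sq_eq_one_of_mul_transpose_eq_one {A : Matrix m m ℝ} (hA : A * Aᵀ = 1)
    (i : m) : ∑ j, A i j ^ 2 = 1 := by
  simpa [mul_apply, sq] using congrFun (congrFun hA i) i

theorem Matrix.trace_conj_diagonal_mul_conj_diagonal (R Q : Matrix m m ℝ) (a b : m → ℝ) :
    trace (R * diagonal a * Rᵀ * (Q * diagonal b * Qᵀ)) =
      ∑ i, ∑ j, a i * b j * (Rᵀ * Q) i j ^ 2 := by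
  have hcycle : trace (R * diagonal a * Rᵀ * (Q * diagonal b * Qᵀ)) =
      trace (diagonal a * ((Rᵀ * Q) * diagonal b * (Rᵀ * Q)ᵀ)) := by
    simp only [Matrix.mul_assoc]
    rw [trace_mul_comm R]
    simp only [transpose_mul, transpose_transpose, Matrix.mul_assoc]
  rw [hcycle, trace]
  refine sum_congr rfl fun i _ => ?_
  rw [diag_apply, diagonal_mul, mul_apply]
  simp only [mul_diagonal, transpose_apply, mul_sum]
  exact sum_congr rfl fun j _ => by ring

theorem IsSpectralDecomp.comp_equiv {X : Matrix m m ℝ} {lam : m → ℝ}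
    (h : IsSpectralDecomp X lam) (e : m ≃ m) : IsSpectralDecomp X (lam ∘ e) := by
  obtain ⟨Q, hQ, rfl⟩ := h
  refine ⟨Q.submatrix id e, ?_, ?_⟩
  · rw [transpose_submatrix, submatrix_mul_equiv, hQ, submatrix_id_id]
  · rw [transpose_submatrix, ← submatrix_diagonal_equiv, submatrix_mul_equiv,
      submatrix_mul_equiv, submatrix_id_id]

theorem IsSpectralDecomp.exists_doublyStochastic_trace_mul {X Y : Matrix m m ℝ} {a b : m → ℝ}
    (hX : IsSpectralDecomp X a) (hY : IsSpectralDecomp Y b) :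
    ∃ w ∈ doublyStochastic ℝ m, trace (X * Y) = ∑ i, ∑ j, a i * b j * w i j := by
  obtain ⟨R, hR, rfl⟩ := hX
  obtain ⟨Q, hQ, rfl⟩ := hY
  have hA : (Rᵀ * Q) * (Rᵀ * Q)ᵀ = 1 := by
    simp only [transpose_mul, transpose_transpose, Matrix.mul_assoc]
    rw [← Matrix.mul_assoc Q, hQ, Matrix.one_mul, mul_eq_one_comm.mp hR]
  have hA' : (Rᵀ * Q)ᵀ * (Rᵀ * Q)ᵀᵀ = 1 := by
    rw [transpose_transpose, mul_eq_one_comm.mp hA]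
  refine ⟨Matrix.of fun i j => (Rᵀ * Q) i j ^ 2, mem_doublyStochastic_iff_sum.mpr
    ⟨fun i j => sq_nonneg _, fun i => ?_, fun j => ?_⟩,
    by simp only [trace_conj_diagonal_mul_conj_diagonal, of_apply]⟩
  · simpa using sum_sq_eq_one_of_mul_transpose_eq_one hA i
  · simpa using sum_sq_eq_one_of_mul_transpose_eq_one hA' j

end Spectral

theorem Real.sum_mul_log_le_log_sum_mul {ι : Type*} {t : Finset ι} {w z : ι → ℝ}
    (hw0 : ∀ i ∈ t, 0 ≤ w i) (hw1 : ∑ i ∈ t, w i = 1) (hz : ∀ i ∈ t, 0 < z i) :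
    ∑ i ∈ t, w i * Real.log (z i) ≤ Real.log (∑ i ∈ t, w i * z i) :=
  strictConcaveOn_log_Ioi.concaveOn.le_map_sum hw0 hw1 hz

theorem Real.log_le_mul_sub_log_sub_one {x c : ℝ} (hx : 0 < x) (hc : 0 < c) :
    Real.log x ≤ x * c - Real.log c - 1 := by
  have h := Real.log_le_sub_one_of_pos (mul_pos hx hc)
  rw [Real.log_mul hx.ne' hc.ne'] at h
  linarith

theorem Finset.sum_mul_pos_of_sum_eq_one {ι : Type*} {t : Finset ι} {w z : ι → ℝ}
    (hw0 : ∀ i ∈ t, 0 ≤ w i) (hw1 : ∑ i ∈ t, w i = 1) (hz : ∀ i ∈ t, 0 < z i) :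
    0 < ∑ i ∈ t, w i * z i := by
  obtain ⟨j, hj, hwj⟩ := exists_ne_zero_of_sum_ne_zero (hw1 ▸ one_ne_zero)
  exact sum_pos' (fun i hi => mul_nonneg (hw0 i hi) (hz i hi).le)
    ⟨j, hj, mul_pos ((hw0 j hj).lt_of_ne' hwj) (hz j hj)⟩

section DoublyStochastic

variable {d s : ℕ} {beta : Fin d → ℝ} {w : Matrix (Fin d) (Fin d) ℝ}

theorem sum_log_le_sum_log_sum_mul_of_mem_doublyStochastic (hs1 : 1 ≤ s) (hsd : s ≤ d)
    (hw : w ∈ doublyStochastic ℝ (Fin d)) (hbeta : Antitone beta) (hpos : ∀ j, 0 < beta j) :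
    ∑ j ∈ univ.filter (fun j : Fin d => d - s ≤ (j : ℕ)), Real.log (beta j) ≤
      ∑ i ∈ univ.filter (fun i : Fin d => (i : ℕ) < s), Real.log (∑ j, w i j * beta j) := by
  obtain ⟨hw0, hrow, hcol⟩ := mem_doublyStochastic_iff_sum.mp hw
  set T := univ.filter fun i : Fin d => (i : ℕ) < s
  have hT : #T = s := by rw [Fin.card_filter_val_lt, min_eq_right hsd]
  have hlog : Antitone (fun j => Real.log (beta j)) :=
    fun j k hjk => Real.log_le_log (hpos k) (hbeta hjk)
  calc ∑ j ∈ univ.filter (fun j : Fin d => d - s ≤ (j : ℕ)), Real.log (beta j)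
      ≤ ∑ j, (∑ i ∈ T, w i j) * Real.log (beta j) := by
        refine hlog.sum_filter_sub_le_val_le_sum_mul hs1 hsd
          (fun j => sum_nonneg fun i _ => hw0 i j)
          (fun j => hcol j ▸ sum_le_sum_of_subset_of_nonneg (subset_univ T) fun i _ _ => hw0 i j) ?_
        rw [sum_comm, sum_congr rfl fun i _ => hrow i, sum_const, hT, nsmul_one]
    _ = ∑ i ∈ T, ∑ j, w i j * Real.log (beta j) := by
        simp only [sum_mul]
        exact sum_comm
    _ ≤ ∑ i ∈ T, Real.log (∑ j, w i j * beta j) :=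
        sum_le_sum fun i _ => Real.sum_mul_log_le_log_sum_mul (fun j _ => hw0 i j) (hrow i)
          fun j _ => hpos j

theorem log_prod_sub_sum_le_of_mem_doublyStochastic (hs1 : 1 ≤ s) (hsd : s ≤ d)
    {lam : Fin d → ℝ} (hw : w ∈ doublyStochastic ℝ (Fin d))
    (hlam0 : ∀ i, 0 ≤ lam i) (hlam : ∀ i : Fin d, (i : ℕ) < s → 0 < lam i)
    (hbeta : Antitone beta) (hpos : ∀ j, 0 < beta j) :
    Real.log (∏ i ∈ univ.filter (fun i : Fin d => (i : ℕ) < s), lam i) -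
        ∑ i, ∑ j, lam i * beta j * w i j ≤
      -Real.log (∏ j ∈ univ.filter (fun j : Fin d => d - s ≤ (j : ℕ)), beta j) - s := by
  set T := univ.filter fun i : Fin d => (i : ℕ) < s
  set c : Fin d → ℝ := fun i => ∑ j, w i j * beta j
  obtain ⟨hw0, hrow, -⟩ := mem_doublyStochastic_iff_sum.mp hw
  have hc : ∀ i, 0 < c i := fun i =>
    sum_mul_pos_of_sum_eq_one (fun j _ => hw0 i j) (hrow i) fun j _ => hpos j
  have hlamT : ∀ i ∈ T, 0 < lam i := fun i hi => hlam i (mem_filter.mp hi).2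
  have hT : #T = s := by rw [Fin.card_filter_val_lt, min_eq_right hsd]
  have htrace : ∑ i, ∑ j, lam i * beta j * w i j = ∑ i, lam i * c i := by
    refine sum_congr rfl fun i _ => ?_
    rw [mul_sum]
    exact sum_congr rfl fun j _ => by ring
  have hpointwise : ∑ i ∈ T, Real.log (lam i) ≤ ∑ i ∈ T, (lam i * c i - Real.log (c i) - 1) :=
    sum_le_sum fun i hi => Real.log_le_mul_sub_log_sub_one (hlamT i hi) (hc i)
  have hdrop : ∑ i ∈ T, lam i * c i ≤ ∑ i, lam i * c i :=
    sum_le_sum_of_subset_of_nonneg (subset_univ T) fun i _ _ => mul_nonneg (hlam0 i) (hc i).le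
  have hmix := sum_log_le_sum_log_sum_mul_of_mem_doublyStochastic hs1 hsd hw hbeta hpos
  rw [sum_sub_distrib, sum_sub_distrib, sum_const, hT, nsmul_one] at hpointwise
  rw [htrace, Real.log_prod fun i hi => (hlamT i hi).ne',
    Real.log_prod fun j _ => (hpos j).ne']
  linarith

end DoublyStochastic

theorem Fin.prod_filter_sub_le_val_eq {M : Type*} [CommMonoid M] (d s : ℕ) (f : Fin d → M) :
    ∏ i ∈ univ.filter (fun i : Fin d => d - s ≤ (i : ℕ)), f i =
      ∏ j ∈ univ.filter (fun j : Fin d => (j : ℕ) < s), f (Fin.rev j) := by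
  rw [← Fin.map_revPerm_filter_val_lt, prod_map]
  rfl

theorem Antitone.pos_of_extVal_sub_one_pos {d s : ℕ} {lam : Fin d → ℝ} (hanti : Antitone lam)
    (hext : 0 < extVal lam (s - 1)) {i : Fin d} (hi : (i : ℕ) < s) : 0 < lam i := by
  rw [extVal] at hext
  split_ifs at hext
  · exact hext.trans_le (hanti (Fin.le_def.mpr (by simp only; omega)))
  · exact absurd hext (lt_irrefl 0)

theorem exists_isSpectralDecomp_log_prod_sub_trace_eq {d s : ℕ} (hs1 : 1 ≤ s) (hsd : s ≤ d)
    {Lam : Matrix (Fin d) (Fin d) ℝ} {beta : Fin d → ℝ}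
    (hsort : Antitone beta) (hpos : ∀ i, 0 < beta i) (hdecomp : IsSpectralDecomp Lam beta) :
    ∃ (X : Matrix (Fin d) (Fin d) ℝ) (lam : Fin d → ℝ),
      Antitone lam ∧ (∀ i, 0 ≤ lam i) ∧ IsSpectralDecomp X lam ∧
      0 < extVal lam (s - 1) ∧
      Real.log (∏ i ∈ univ.filter (fun i : Fin d => (i : ℕ) < s), lam i) - trace (X * Lam) =
        -Real.log (∏ i ∈ univ.filter (fun i : Fin d => d - s ≤ (i : ℕ)), beta i) - s := by
  obtain ⟨P, hP, hLam⟩ := hdecomp.comp_equiv Fin.revPerm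
  set T := univ.filter fun i : Fin d => (i : ℕ) < s
  set lam : Fin d → ℝ := fun j => if (j : ℕ) < s then (beta (Fin.rev j))⁻¹ else 0
  have hlam0 : ∀ j, 0 ≤ lam j := fun j => by
    simp only [lam]
    split_ifs
    exacts [(inv_pos.mpr (hpos _)).le, le_rfl]
  have htrace : trace (P * diagonal lam * Pᵀ * Lam) = s := by
    have hterm : ∀ j, lam j * beta (Fin.rev j) = if (j : ℕ) < s then 1 else 0 := fun j => by
      simp only [lam]
      split_ifs
      exacts [inv_mul_cancel₀ (hpos _).ne', zero_mul _]
    rw [hLam, trace_conj_diagonal_mul_conj_diagonal, mul_eq_one_comm.mp hP]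
    simp [one_apply, hterm, Fin.card_filter_val_lt, min_eq_right hsd]
  have hprod : ∏ i ∈ T, lam i = (∏ j ∈ T, beta (Fin.rev j))⁻¹ := by
    rw [← prod_inv_distrib]
    exact prod_congr rfl fun j hj => if_pos (mem_filter.mp hj).2
  refine ⟨P * diagonal lam * Pᵀ, lam, fun x y hxy => ?_, hlam0, ⟨P, hP, rfl⟩, ?_, ?_⟩
  · by_cases hy : (y : ℕ) < s
    · have hx : (x : ℕ) < s := lt_of_le_of_lt hxy hy
      simp only [lam, if_pos hx, if_pos hy]
      exact inv_anti₀ (hpos _) (hsort (Fin.rev_le_rev.mpr hxy))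
    · simp only [lam, if_neg hy]
      exact hlam0 x
  · rw [extVal, dif_pos (by omega)]
    simp only [lam, if_pos (show s - 1 < s by omega)]
    exact inv_pos.mpr (hpos _)
  · rw [htrace, hprod, Fin.prod_filter_sub_le_val_eq, Real.log_inv]

/-- For a symmetric positive definite `Λ`,
`max_{X ⪰ 0} { log det^s(X) − tr(XΛ) } = − log det_s(Λ) − s`:
(a) every PSD `X` whose `s`-th largest eigenvalue is positive satisfies the inequality, and
(b) some PSD `X` attains equality. -/
theorem stmt_2 (d s : ℕ) (hs1 : 1 ≤ s) (hsd : s ≤ d)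
    (Lam : Matrix (Fin d) (Fin d) ℝ) (beta : Fin d → ℝ)
    (hsort : Antitone beta) (hpos : ∀ i, 0 < beta i)
    (hdecomp : IsSpectralDecomp Lam beta) :
    (∀ (X : Matrix (Fin d) (Fin d) ℝ) (lam : Fin d → ℝ),
        Antitone lam → (∀ i, 0 ≤ lam i) → IsSpectralDecomp X lam →
        0 < extVal lam (s - 1) →
        Real.log (∏ i ∈ Finset.univ.filter (fun i : Fin d => (i : ℕ) < s), lam i)
            - Matrix.trace (X * Lam)
          ≤ - Real.log (∏ i ∈ Finset.univ.filter (fun i : Fin d => d - s ≤ (i : ℕ)), beta i)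
            - s) ∧
    (∃ (X : Matrix (Fin d) (Fin d) ℝ) (lam : Fin d → ℝ),
        Antitone lam ∧ (∀ i, 0 ≤ lam i) ∧ IsSpectralDecomp X lam ∧
        0 < extVal lam (s - 1) ∧
        Real.log (∏ i ∈ Finset.univ.filter (fun i : Fin d => (i : ℕ) < s), lam i)
            - Matrix.trace (X * Lam)
          = - Real.log (∏ i ∈ Finset.univ.filter (fun i : Fin d => d - s ≤ (i : ℕ)), beta i)
            - s) := by
  refine ⟨fun X lam hanti hlam0 hX hext => ?_,
    exists_isSpectralDecomp_log_prod_sub_trace_eq hs1 hsd hsort hpos hdecomp⟩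
  obtain ⟨w, hw, htrace⟩ := hX.exists_doublyStochastic_trace_mul hdecomp
  rw [htrace]
  exact log_prod_sub_sum_le_of_mem_doublyStochastic hs1 hsd hw hlam0
    (fun i hi => hanti.pos_of_extVal_sub_one_pos hext hi) hsort hpos
end
end

section
/- Let C = VᵀV be an n×n real positive semidefinite matrix, where V is a d×n real matrix with columns v_1,…,v_n, and let s be an integer with 1 ≤ s ≤ d. Suppose Λ is a d×d real symmetric positive definite matrix, ν ∈ ℝ, and μ ∈ ℝⁿ with μ_i ≥ 0 for all i, such that ν + μ_i ≥ v_iᵀ Λ v_i for every i ∈ {1,…,n}. Then for every subset S ⊆ {1,…,n} with |S| = s and C_{S,S} nonsingular, log det(C_{S,S}) ≤ −log det_s(Λ) + s·ν + ∑_{i=1}^n μ_i − s. (Weak duality: the Lagrangian dual value z^{LD} is an upper bound on the optimal value z* of the maximum entropy sampling problem max_{|S|=s} log det(C_{S,S}).) -/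
/-!
Write `Λ = Q diag(β) Qᵀ`, `W = V_S` and `H = Wᵀ Λ W`. Expanding `det H` row by row and averaging
over the `s!` permutations of each choice of rows `f` gives
`s! · det H = ∑_f (∏ᵢ β_{f i}) · det(M_f)²` with `M = Qᵀ W`, a Cauchy–Binet formula weighted
by `β`. Only injective `f` contribute, and for those `∏ᵢ β_{f i} ≥ det_s(Λ)` because `β` is
antitone, so `det_s(Λ) · det C_{S,S} ≤ det H`. Finally `log det H ≤ tr H - s` (apply
`log x ≤ x - 1` to the eigenvalues of `H`), and `tr H = ∑_{i ∈ S} v_iᵀ Λ v_i ≤ s ν + ∑ μ_i`.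
-/

open Matrix Finset

noncomputable section

theorem Finset.prod_le_prod_of_card_eq_of_forall_sdiff_le {ι R : Type*} [DecidableEq ι]
    [CommSemiring R] [PartialOrder R] [IsOrderedRing R] {A T : Finset ι} {β : ι → R}
    (hβ : ∀ i, 0 ≤ β i) (hcard : #A = #T)
    (hle : ∀ a ∈ A \ T, ∀ t ∈ T \ A, β a ≤ β t) :
    ∏ i ∈ A, β i ≤ ∏ i ∈ T, β i := by
  have e : ↥(A \ T) ≃ ↥(T \ A) := Fintype.equivOfCardEq (by simpa using card_sdiff_comm hcard)
  have hsdiff : ∏ i ∈ A \ T, β i ≤ ∏ i ∈ T \ A, β i := by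
    -- any bijection will do, since `hle` compares every pair
    rw [← prod_coe_sort, ← prod_coe_sort (T \ A), ← e.prod_comp]
    exact prod_le_prod (fun i _ => hβ _) fun i _ => hle _ i.2 _ (e i).2
  rw [← prod_inter_mul_prod_sdiff A T, ← prod_inter_mul_prod_sdiff T A, inter_comm]
  exact mul_le_mul_of_nonneg_left hsdiff (prod_nonneg fun i _ => hβ i)

theorem Fin.card_filter_le_val {d : ℕ} (k : ℕ) :
    #{i : Fin d | k ≤ (i : ℕ)} = d - k := by
  have hlt := Fin.card_filter_val_lt (n := d) (m := k)
  have hsum := card_filter_add_card_filter_not (s := univ) (fun i : Fin d => (i : ℕ) < k)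
  simp only [not_lt, card_univ, Fintype.card_fin] at hsum
  omega

theorem prod_filter_le_prod_of_antitone {R : Type*} [CommSemiring R] [PartialOrder R]
    [IsOrderedRing R] {d s : ℕ} (hsd : s ≤ d) {β : Fin d → R}
    (hβ : ∀ i, 0 ≤ β i) (hanti : Antitone β) {T : Finset (Fin d)} (hT : #T = s) :
    ∏ i ∈ univ.filter (fun i : Fin d => d - s ≤ (i : ℕ)), β i ≤ ∏ i ∈ T, β i := by
  refine prod_le_prod_of_card_eq_of_forall_sdiff_le hβ ?_ fun a ha t ht => hanti ?_
  · rw [Fin.card_filter_le_val, hT]; omega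
  · simp only [mem_sdiff, mem_filter, mem_univ, true_and] at ha ht
    exact Fin.le_def.mpr (by omega)

theorem Matrix.trace_transpose_mul_mul {R ι κ : Type*} [Fintype ι] [Fintype κ] [CommSemiring R]
    (W : Matrix κ ι R) (A : Matrix κ κ R) :
    (Wᵀ * A * W).trace = ∑ i, (fun k => W k i) ⬝ᵥ (A *ᵥ fun k => W k i) := by
  rw [Matrix.mul_assoc]
  simp only [trace, diag, mul_apply, transpose_apply, dotProduct, mulVec]

namespace Matrix
variable {R ι κ : Type*} [Fintype ι] [DecidableEq ι] [Fintype κ]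

theorem det_mul_eq_sum_prod_mul_det_submatrix [CommRing R] (A : Matrix ι κ R) (B : Matrix κ ι R) :
    (A * B).det = ∑ f : ι → κ, (∏ i, A i (f i)) * (B.submatrix f id).det := by
  have hrows : A * B = fun i => ∑ k, A i k • B k := by
    ext i j
    simp [mul_apply, Finset.sum_apply]
  calc (A * B).det = detRowAlternating fun i => ∑ k, A i k • B k := by rw [← hrows]; rfl
    _ = ∑ f : ι → κ, detRowAlternating fun i => A i (f i) • B (f i) :=
        (detRowAlternating (R := R) (n := ι)).toMultilinearMap.map_sum _
    _ = _ := by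
        refine Finset.sum_congr rfl fun f _ => ?_
        exact ((detRowAlternating (R := R) (n := ι)).toMultilinearMap.map_smul_univ
          (fun i => A i (f i)) (fun i => B (f i))).trans (smul_eq_mul _ _)

variable [DecidableEq κ]

theorem factorial_card_mul_det_transpose_mul_diagonal_mul [CommRing R]
    (M : Matrix κ ι R) (β : κ → R) :
    (Fintype.card ι).factorial * (Mᵀ * diagonal β * M).det =
      ∑ f : ι → κ, (∏ i, β (f i)) * (M.submatrix f id).det ^ 2 := by
  set c : (ι → κ) → R := fun f => (∏ i, M (f i) i * β (f i)) * (M.submatrix f id).det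
  have hperm (σ : Equiv.Perm ι) : (Mᵀ * diagonal β * M).det = ∑ f : ι → κ, c (f ∘ σ) := by
    simp only [det_mul_eq_sum_prod_mul_det_submatrix, mul_diagonal, transpose_apply]
    exact ((Equiv.arrowCongr σ.symm (Equiv.refl κ)).sum_comp c).symm
  have horbit (f : ι → κ) :
      ∑ σ : Equiv.Perm ι, c (f ∘ σ) = (∏ i, β (f i)) * (M.submatrix f id).det ^ 2 := by
    have hterm (σ : Equiv.Perm ι) : c (f ∘ σ) = (∏ i, β (f i)) * (M.submatrix f id).det *
        (Equiv.Perm.sign σ * ∏ i, M.submatrix f id (σ i) i) := by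
      have hdet : (M.submatrix (f ∘ σ) id).det = Equiv.Perm.sign σ * (M.submatrix f id).det := by
        rw [← det_permute σ]; rfl
      simp only [c, hdet, prod_mul_distrib, Function.comp_apply, submatrix_apply, id]
      rw [Equiv.prod_comp σ (fun i => β (f i))]
      ring
    rw [sum_congr rfl fun σ _ => hterm σ, ← mul_sum, ← det_apply' (M.submatrix f id)]
    ring
  calc (Fintype.card ι).factorial * (Mᵀ * diagonal β * M).det
      = ∑ σ : Equiv.Perm ι, ∑ f : ι → κ, c (f ∘ σ) := by
        simp only [← hperm, sum_const, card_univ, Fintype.card_perm, nsmul_eq_mul]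
    _ = _ := by rw [sum_comm]; exact sum_congr rfl fun f _ => horbit f

theorem mul_det_transpose_mul_self_le_det_transpose_mul_diagonal_mul [CommRing R] [LinearOrder R]
    [IsStrictOrderedRing R] (M : Matrix κ ι R) {β : κ → R} {c : R}
    (hc : ∀ f : ι → κ, Function.Injective f → c ≤ ∏ i, β (f i)) :
    c * (Mᵀ * M).det ≤ (Mᵀ * diagonal β * M).det := by
  have hterm (f : ι → κ) :
      c * (M.submatrix f id).det ^ 2 ≤ (∏ i, β (f i)) * (M.submatrix f id).det ^ 2 := by
    by_cases hf : Function.Injective f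
    · exact mul_le_mul_of_nonneg_right (hc f hf) (sq_nonneg _)
    · obtain ⟨a, b, hab, hne⟩ : ∃ a b, f a = f b ∧ a ≠ b := by
        simpa [Function.Injective] using hf
      have : (M.submatrix f id).det = 0 :=
        det_zero_of_row_eq hne (funext fun k => by simp [hab])
      simp [this]
  have hfact : (0 : R) < (Fintype.card ι).factorial := Nat.cast_pos.mpr (Nat.factorial_pos _)
  refine le_of_mul_le_mul_left ?_ hfact
  have hone := factorial_card_mul_det_transpose_mul_diagonal_mul M (fun _ => (1 : R))
  simp only [diagonal_one, Matrix.mul_one, prod_const_one, one_mul] at hone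
  calc (Fintype.card ι).factorial * (c * (Mᵀ * M).det)
      = ∑ f : ι → κ, c * (M.submatrix f id).det ^ 2 := by
        rw [mul_left_comm, hone, mul_sum]
    _ ≤ ∑ f : ι → κ, (∏ i, β (f i)) * (M.submatrix f id).det ^ 2 := sum_le_sum fun f _ => hterm f
    _ = _ := (factorial_card_mul_det_transpose_mul_diagonal_mul M β).symm

theorem PosDef.log_det_le_trace_sub_card {A : Matrix ι ι ℝ} (hA : A.PosDef) :
    Real.log A.det ≤ A.trace - Fintype.card ι := by
  have hpos := hA.eigenvalues_pos
  rw [hA.isHermitian.det_eq_prod_eigenvalues, hA.isHermitian.trace_eq_sum_eigenvalues]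
  simp only [RCLike.ofReal_real_eq_id, id]
  rw [Real.log_prod fun i _ => (hpos i).ne']
  calc ∑ i, Real.log (hA.1.eigenvalues i) ≤ ∑ i, (hA.1.eigenvalues i - 1) :=
        sum_le_sum fun i _ => Real.log_le_sub_one_of_pos (hpos i)
    _ = _ := by simp [sum_sub_distrib]

end Matrix

theorem IsSpectralDecomp.posSemidef {m : Type*} [Fintype m] [DecidableEq m]
    {Lam : Matrix m m ℝ} {β : m → ℝ}
    (hdecomp : IsSpectralDecomp Lam β) (hβ : ∀ i, 0 ≤ β i) : Lam.PosSemidef := by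
  obtain ⟨Q, -, rfl⟩ := hdecomp
  simpa using (posSemidef_diagonal_iff.mpr hβ).conjTranspose_mul_mul_same Qᵀ

theorem IsSpectralDecomp.prod_filter_mul_det_le {d s : ℕ} {ι : Type*} [Fintype ι] [DecidableEq ι]
    {Lam : Matrix (Fin d) (Fin d) ℝ} {β : Fin d → ℝ} (hdecomp : IsSpectralDecomp Lam β)
    (hβ : ∀ i, 0 ≤ β i) (hanti : Antitone β) (hsd : s ≤ d) (hcard : Fintype.card ι = s)
    (W : Matrix (Fin d) ι ℝ) :
    (∏ i ∈ univ.filter (fun i : Fin d => d - s ≤ (i : ℕ)), β i) * (Wᵀ * W).det ≤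
      (Wᵀ * Lam * W).det := by
  obtain ⟨Q, hQ, rfl⟩ := hdecomp
  have hM : (Qᵀ * W)ᵀ * (Qᵀ * W) = Wᵀ * W := by
    rw [transpose_mul, transpose_transpose, Matrix.mul_assoc, ← Matrix.mul_assoc Q, hQ,
      Matrix.one_mul]
  have hMD : (Qᵀ * W)ᵀ * diagonal β * (Qᵀ * W) = Wᵀ * (Q * diagonal β * Qᵀ) * W := by
    simp only [transpose_mul, transpose_transpose, Matrix.mul_assoc]
  rw [← hM, ← hMD]
  refine mul_det_transpose_mul_self_le_det_transpose_mul_diagonal_mul _ fun f hf => ?_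
  rw [← prod_image fun a _ b _ h => hf h]
  exact prod_filter_le_prod_of_antitone hsd hβ hanti
    (by rw [card_image_of_injective _ hf, card_univ, hcard])

theorem subSub_transpose_mul_self {d n : ℕ} (V : Matrix (Fin d) (Fin n) ℝ) (S : Finset (Fin n)) :
    subSub (Vᵀ * V) S = (V.submatrix id (↑))ᵀ * V.submatrix id ((↑) : S → Fin n) := by
  ext a b
  simp [subSub, mul_apply]

theorem trace_transpose_mul_mul_submatrix_le {d n : ℕ} (V : Matrix (Fin d) (Fin n) ℝ)
    (Lam : Matrix (Fin d) (Fin d) ℝ) {ν : ℝ} {μ : Fin n → ℝ} (hμ : ∀ i, 0 ≤ μ i)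
    (hfeas : ∀ i : Fin n, (fun a => V a i) ⬝ᵥ (Lam *ᵥ fun a => V a i) ≤ ν + μ i)
    (S : Finset (Fin n)) :
    ((V.submatrix id (↑))ᵀ * Lam * V.submatrix id ((↑) : S → Fin n)).trace ≤
      #S * ν + ∑ i, μ i := by
  rw [trace_transpose_mul_mul]
  calc ∑ i : S, _ ≤ ∑ i : S, (ν + μ i) := sum_le_sum fun i _ => hfeas i
    _ = #S * ν + ∑ i ∈ S, μ i := by
      rw [sum_add_distrib, sum_const, card_univ, Fintype.card_coe, nsmul_eq_mul, sum_coe_sort S μ]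
    _ ≤ #S * ν + ∑ i, μ i := by
      gcongr
      · exact fun i _ _ => hμ i
      · exact subset_univ S

theorem stmt_3_general (d n s : ℕ) (hsd : s ≤ d)
    (V : Matrix (Fin d) (Fin n) ℝ)
    (Lam : Matrix (Fin d) (Fin d) ℝ) (beta : Fin d → ℝ)
    (hsort : Antitone beta) (hpos : ∀ i, 0 < beta i)
    (hdecomp : IsSpectralDecomp Lam beta)
    (ν : ℝ) (μ : Fin n → ℝ) (hμ : ∀ i, 0 ≤ μ i)
    (hfeas : ∀ i : Fin n, (fun a => V a i) ⬝ᵥ (Lam *ᵥ fun a => V a i) ≤ ν + μ i)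
    (S : Finset (Fin n)) (hS : S.card = s) (hnonsing : (subSub (Vᵀ * V) S).det ≠ 0) :
    Real.log (subSub (Vᵀ * V) S).det ≤
      - Real.log (∏ i ∈ Finset.univ.filter (fun i : Fin d => d - s ≤ (i : ℕ)), beta i)
        + s * ν + ∑ i, μ i - s := by
  rw [subSub_transpose_mul_self] at hnonsing ⊢
  set W : Matrix (Fin d) S ℝ := V.submatrix id (↑)
  set p := ∏ i ∈ univ.filter (fun i : Fin d => d - s ≤ (i : ℕ)), beta i
  have hcard : Fintype.card S = s := by rw [Fintype.card_coe, hS]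
  have hβ : ∀ i, 0 ≤ beta i := fun i => (hpos i).le
  have hp : 0 < p := prod_pos fun i _ => hpos i
  have hGpos : 0 < (Wᵀ * W).det :=
    (posSemidef_conjTranspose_mul_self W).det_nonneg.lt_of_ne' hnonsing
  have hdet : p * (Wᵀ * W).det ≤ (Wᵀ * Lam * W).det :=
    hdecomp.prod_filter_mul_det_le hβ hsort hsd hcard W
  have hH : (Wᵀ * Lam * W).PosDef :=
    ((hdecomp.posSemidef hβ).conjTranspose_mul_mul_same W).posDef_iff_det_ne_zero.mpr
      (lt_of_lt_of_le (mul_pos hp hGpos) hdet).ne'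
  have hlog := hH.log_det_le_trace_sub_card
  have htrace := trace_transpose_mul_mul_submatrix_le V Lam hμ hfeas S
  rw [hcard] at hlog
  rw [hS] at htrace
  calc Real.log (Wᵀ * W).det = Real.log (p * (Wᵀ * W).det) - Real.log p := by
        rw [Real.log_mul hp.ne' hGpos.ne']; ring
    _ ≤ Real.log (Wᵀ * Lam * W).det - Real.log p := by gcongr
    _ ≤ _ := by linarith

/-- Weak duality for MESP: any feasible solution `(Λ, ν, μ)` of the
Lagrangian dual gives an upper bound on `log det(C_{S,S})` for every size-`s` subset `S`
with `C_{S,S}` nonsingular. -/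
theorem stmt_3 (d n s : ℕ) (hs1 : 1 ≤ s) (hsd : s ≤ d)
    (V : Matrix (Fin d) (Fin n) ℝ)
    (Lam : Matrix (Fin d) (Fin d) ℝ) (beta : Fin d → ℝ)
    (hsort : Antitone beta) (hpos : ∀ i, 0 < beta i)
    (hdecomp : IsSpectralDecomp Lam beta)
    (ν : ℝ) (μ : Fin n → ℝ) (hμ : ∀ i, 0 ≤ μ i)
    (hfeas : ∀ i : Fin n, (fun a => V a i) ⬝ᵥ (Lam *ᵥ fun a => V a i) ≤ ν + μ i)
    (S : Finset (Fin n)) (hS : S.card = s) (hnonsing : (subSub (Vᵀ * V) S).det ≠ 0) :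
    Real.log (subSub (Vᵀ * V) S).det ≤
      - Real.log (∏ i ∈ Finset.univ.filter (fun i : Fin d => d - s ≤ (i : ℕ)), beta i)
        + s * ν + ∑ i, μ i - s :=
  stmt_3_general d n s hsd V Lam beta hsort hpos hdecomp ν μ hμ hfeas S hS hnonsing
end
end

section
/- Let λ ∈ ℝ^d with λ₁ ≥ ⋯ ≥ λ_d ≥ 0 and let s be an integer with 1 ≤ s ≤ d. Then there exists a unique integer k with 0 ≤ k < s such that (1/(s−k)) ∑_{i=k+1}^d λ_i ≥ λ_{k+1}, and in addition either k = 0 or λ_k > (1/(s−k)) ∑_{i=k+1}^d λ_i (this captures the convention λ₀ = +∞). -/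
open Matrix Finset

noncomputable section

/-- For a nonincreasing nonnegative `λ ∈ ℝ^d` and `1 ≤ s ≤ d`, there is a
unique integer `0 ≤ k < s` with `(1/(s−k)) ∑_{i=k+1}^d λᵢ ≥ λ_{k+1}` and, unless `k = 0`,
`λ_k > (1/(s−k)) ∑_{i=k+1}^d λᵢ` (the convention `λ₀ = +∞`). -/
theorem stmt_4 (d s : ℕ) (hs1 : 1 ≤ s) (hsd : s ≤ d)
    (lam : Fin d → ℝ) (hsort : Antitone lam) (hnn : ∀ i, 0 ≤ lam i) :
    ∃! k : ℕ, k < s ∧ extVal lam k ≤ tailSum lam k / ((s : ℝ) - k) ∧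
      (k = 0 ∨ tailSum lam k / ((s : ℝ) - k) < extVal lam (k - 1)) := by
  classical
  -- recurrence for tail sums
  have hrec : ∀ k (hk : k < d), tailSum lam k = lam ⟨k, hk⟩ + tailSum lam (k+1) := by
    intro k hk
    have hset : (Finset.univ.filter (fun i : Fin d => k ≤ (i : ℕ)))
        = insert (⟨k, hk⟩ : Fin d) (Finset.univ.filter (fun i : Fin d => k+1 ≤ (i : ℕ))) := by
      ext i
      simp only [Finset.mem_filter, Finset.mem_insert, Finset.mem_univ, true_and, Fin.ext_iff]
      omega
    rw [tailSum, hset, Finset.sum_insert (by simp), tailSum]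
  have hTnn : ∀ k, 0 ≤ tailSum lam k := by
    intro k
    exact Finset.sum_nonneg fun i _ => hnn i
  have hpos : ∀ k, k < s → (0:ℝ) < (s:ℝ) - k := by
    intro k hk
    have : (k:ℝ) < s := by exact_mod_cast hk
    linarith
  have hext : ∀ k (hk : k < d), extVal lam k = lam ⟨k, hk⟩ := by
    intro k hk; simp [extVal, hk]
  -- pushing step
  have push : ∀ k (hk : k + 1 < s) (hkd : k < d),
      lam ⟨k, hkd⟩ ≤ tailSum lam k / ((s:ℝ) - k) →
      lam ⟨k, hkd⟩ ≤ tailSum lam (k+1) / ((s:ℝ) - (k+1:ℕ)) := by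
    intro k hk hkd h
    have h1 : (0:ℝ) < (s:ℝ) - k := hpos k (by omega)
    have h2 : (0:ℝ) < (s:ℝ) - (k+1:ℕ) := hpos (k+1) hk
    rw [le_div_iff₀ h1] at h
    rw [le_div_iff₀ h2]
    rw [hrec k hkd] at h
    have hc : ((k+1:ℕ):ℝ) = (k:ℝ) + 1 := by push_cast; ring
    have he : lam ⟨k, hkd⟩ * ((s:ℝ) - ((k:ℝ)+1)) = lam ⟨k, hkd⟩ * ((s:ℝ) - k) - lam ⟨k, hkd⟩ := by
      ring
    rw [hc, he]
    linarith
  -- the chain lemma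
  have main : ∀ k, k < s → extVal lam k ≤ tailSum lam k / ((s:ℝ) - k) →
      ∀ j, k ≤ j → j + 1 < s →
      extVal lam j ≤ tailSum lam (j+1) / ((s:ℝ) - (j+1:ℕ)) := by
    intro k hk hPk
    intro j hkj
    induction j, hkj using Nat.le_induction with
    | base =>
      intro hk1
      have hkd : k < d := lt_of_lt_of_le hk hsd
      rw [hext k hkd] at hPk ⊢
      exact push k hk1 hkd hPk
    | succ j hkj ih =>
      intro hj2
      have hj1 : j + 1 < s := by omega
      have hjd : j < d := by omega
      have hj1d : j + 1 < d := by omega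
      have := ih hj1
      rw [hext j hjd] at this
      rw [hext (j+1) hj1d]
      have hmono : lam ⟨j+1, hj1d⟩ ≤ lam ⟨j, hjd⟩ := hsort (by simp [Fin.le_def])
      exact push (j+1) hj2 hj1d (le_trans hmono this)
  -- the predicate and existence of a witness
  set P : ℕ → Prop := fun k => k < s ∧ extVal lam k ≤ tailSum lam k / ((s:ℝ) - k) with hPdef
  have hwit : P (s - 1) := by
    refine ⟨by omega, ?_⟩
    have hd : s - 1 < d := by omega
    rw [hext (s-1) hd]
    have hc : ((s:ℝ) - ((s-1:ℕ):ℝ)) = 1 := by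
      have : ((s-1:ℕ):ℝ) = (s:ℝ) - 1 := by
        push_cast [Nat.cast_sub hs1]; ring
      rw [this]; ring
    rw [hc, div_one, hrec (s-1) hd]
    have := hTnn (s-1+1)
    linarith
  have hPdec : DecidablePred P := Classical.decPred _
  have hex : ∃ k, P k := ⟨s - 1, hwit⟩
  set k := Nat.find hex with hkdef
  have hPk : P k := Nat.find_spec hex
  have hmin : ∀ m, m < k → ¬ P m := fun m hm => Nat.find_min hex hm
  refine ⟨k, ⟨hPk.1, hPk.2, ?_⟩, ?_⟩
  · -- third condition for k
    rcases Nat.eq_zero_or_pos k with h0 | h0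
    · exact Or.inl h0
    · right
      have hk1 : k - 1 < k := by omega
      have hnp := hmin (k-1) hk1
      have hk1s : k - 1 < s := by omega
      have hk1d : k - 1 < d := by omega
      have hlt : tailSum lam (k-1) / ((s:ℝ) - (k-1:ℕ)) < extVal lam (k-1) := by
        by_contra hcon
        push_neg at hcon
        exact hnp ⟨hk1s, hcon⟩
      rw [hext (k-1) hk1d] at hlt ⊢
      have h1 : (0:ℝ) < (s:ℝ) - (k-1:ℕ) := hpos (k-1) hk1s
      have h2 : (0:ℝ) < (s:ℝ) - k := hpos k hPk.1
      rw [div_lt_iff₀ h1] at hlt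
      rw [div_lt_iff₀ h2]
      have hrw : tailSum lam (k-1) = lam ⟨k-1, hk1d⟩ + tailSum lam k := by
        have := hrec (k-1) hk1d
        rwa [Nat.sub_add_cancel h0] at this
      rw [hrw] at hlt
      have hc : ((k-1:ℕ):ℝ) = (k:ℝ) - 1 := by
        push_cast [Nat.cast_sub h0]; ring
      rw [hc] at hlt
      nlinarith
  · -- uniqueness
    rintro m ⟨hm1, hm2, hm3⟩
    by_contra hne
    rcases lt_or_gt_of_ne hne with hlt | hgt
    · -- m < k contradicts minimality
      exact hmin m hlt ⟨hm1, hm2⟩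
    · -- m > k ≥ 0, so m ≠ 0 and third condition of m contradicts main
      have hm0 : m ≠ 0 := by omega
      rcases hm3 with h | h
      · exact hm0 h
      · have := main k hPk.1 hPk.2 (m-1) (by omega) (by omega)
        rw [Nat.sub_add_cancel (by omega)] at this
        linarith
end
end

section
/- Let λ ∈ ℝ^d with λ₁ ≥ ⋯ ≥ λ_r > λ_{r+1} = ⋯ = λ_d = 0 for some r with s ≤ r ≤ d, and let k = k(λ,s). Then: (a) for every β ∈ ℝ^d with 0 < β₁ ≤ ⋯ ≤ β_d, one has −∑_{i=1}^s log β_i + ∑_{i=1}^d λ_i β_i ≥ log(∏_{i=1}^k λ_i) + (s−k)·log((1/(s−k)) ∑_{i=k+1}^d λ_i) + s; and (b) equality is attained by the vector β* with β*_i = 1/λ_i for i ∈ {1,…,k} and β*_i = (s−k)/(∑_{j=k+1}^d λ_j) for i ∈ {k+1,…,d}. -/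
open Matrix Finset

noncomputable section

/-!
Split the indices into `i ≤ k`, `k < i ≤ s` and `i > s` (1-based), and put
`c = (1/(s-k)) ∑_{i>k} λ_i`. On the first block `log x ≤ x - 1` at `x = λ_i β_i` bounds each
term; on the middle block the same inequality at `x = c β_i` gives
`(s-k) log c + ∑ log β_i + (s-k) ≤ c ∑ β_i`. The choice of `k` gives `λ_i ≤ c` for `i > k`,
and by definition of `c` the excess `∑_{k<i≤s} (c - λ_i)` equals `∑_{i>s} λ_i`; as `β` is
nondecreasing, shifting it onto the tail yields `c ∑_{k<i≤s} β_i ≤ ∑_{i>k} λ_i β_i`.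
For `β*` every one of these inequalities is an equality.
-/

namespace Fin

variable {d : ℕ} {M : Type*} [AddCommMonoid M]

theorem sum_eq_sum_filter_val_lt_add (k : ℕ) (f : Fin d → M) :
    ∑ i, f i = ∑ i ∈ univ.filter (fun i : Fin d => (i : ℕ) < k), f i
      + ∑ i ∈ univ.filter (fun i : Fin d => k ≤ (i : ℕ)), f i := by
  rw [← sum_filter_add_sum_filter_not univ (fun i : Fin d => (i : ℕ) < k)]
  simp only [not_lt]

theorem sum_filter_val_lt_eq_add {k s : ℕ} (hks : k ≤ s) (f : Fin d → M) :
    ∑ i ∈ univ.filter (fun i : Fin d => (i : ℕ) < s), f i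
      = ∑ i ∈ univ.filter (fun i : Fin d => (i : ℕ) < k), f i
        + ∑ i ∈ univ.filter (fun i : Fin d => k ≤ (i : ℕ) ∧ (i : ℕ) < s), f i := by
  rw [← sum_filter_add_sum_filter_not _ (fun i : Fin d => (i : ℕ) < k), filter_filter,
    filter_filter]
  congr 2 <;> ext i <;> simp only [mem_filter, mem_univ, true_and] <;> omega

theorem sum_filter_le_val_eq_add {k s : ℕ} (hks : k ≤ s) (f : Fin d → M) :
    ∑ i ∈ univ.filter (fun i : Fin d => k ≤ (i : ℕ)), f i
      = ∑ i ∈ univ.filter (fun i : Fin d => k ≤ (i : ℕ) ∧ (i : ℕ) < s), f i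
        + ∑ i ∈ univ.filter (fun i : Fin d => s ≤ (i : ℕ)), f i := by
  rw [← sum_filter_add_sum_filter_not _ (fun i : Fin d => (i : ℕ) < s), filter_filter,
    filter_filter]
  congr 2
  ext i
  simp only [mem_filter, mem_univ, true_and]
  omega

end Fin

theorem sum_log_add_card_le_sum_mul {ι : Type*} (A : Finset ι) {a b : ι → ℝ}
    (ha : ∀ i ∈ A, 0 < a i) (hb : ∀ i ∈ A, 0 < b i) :
    ∑ i ∈ A, Real.log (a i) + ∑ i ∈ A, Real.log (b i) + #A ≤ ∑ i ∈ A, a i * b i := by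
  have key : ∀ i ∈ A, Real.log (a i) + Real.log (b i) + 1 ≤ a i * b i := fun i hi => by
    have := Real.log_le_sub_one_of_pos (mul_pos (ha i hi) (hb i hi))
    rw [Real.log_mul (ha i hi).ne' (hb i hi).ne'] at this
    linarith
  simpa only [sum_add_distrib, sum_const, nsmul_one] using sum_le_sum key

theorem mul_sum_le_sum_mul_add_sum_mul {ι : Type*} {B C : Finset ι} {lam beta : ι → ℝ}
    {c M : ℝ} (hlamB : ∀ i ∈ B, lam i ≤ c) (hlamC : ∀ i ∈ C, 0 ≤ lam i)
    (hbetaB : ∀ i ∈ B, beta i ≤ M) (hbetaC : ∀ i ∈ C, M ≤ beta i)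
    (hmass : ∑ i ∈ B, lam i + ∑ i ∈ C, lam i = #B * c) :
    c * ∑ i ∈ B, beta i ≤ ∑ i ∈ B, lam i * beta i + ∑ i ∈ C, lam i * beta i := by
  have hexcess : ∑ i ∈ B, (c - lam i) * M = ∑ i ∈ C, lam i * M := by
    rw [← sum_mul, ← sum_mul, sum_sub_distrib, sum_const, nsmul_eq_mul]
    congr 1
    linarith
  calc c * ∑ i ∈ B, beta i
      = ∑ i ∈ B, (c - lam i) * beta i + ∑ i ∈ B, lam i * beta i := by
        rw [← sum_add_distrib, mul_sum]
        exact sum_congr rfl fun i _ => by ring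
    _ ≤ ∑ i ∈ B, (c - lam i) * M + ∑ i ∈ B, lam i * beta i := by
        gcongr with i hi
        · exact sub_nonneg.2 (hlamB i hi)
        · exact hbetaB i hi
    _ ≤ ∑ i ∈ B, lam i * beta i + ∑ i ∈ C, lam i * beta i := by
        rw [hexcess, add_comm]
        gcongr with i hi
        · exact hlamC i hi
        · exact hbetaC i hi

theorem tailSum_pos {d k : ℕ} {lam : Fin d → ℝ} (hnonneg : ∀ i, 0 ≤ lam i) {i : Fin d}
    (hi : k ≤ (i : ℕ)) (hpos : 0 < lam i) : 0 < tailSum lam k :=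
  hpos.trans_le (single_le_sum (fun j _ => hnonneg j) (by simpa using hi))

namespace IsKIndex

variable {d s k : ℕ} {lam : Fin d → ℝ}

theorem sub_pos (hk : IsKIndex lam s k) : 0 < (s : ℝ) - k := by
  have : (k : ℝ) < s := by exact_mod_cast hk.1
  linarith

theorem le_tailSum_div (hk : IsKIndex lam s k) (hsort : Antitone lam) {i : Fin d}
    (hi : k ≤ (i : ℕ)) : lam i ≤ tailSum lam k / ((s : ℝ) - k) := by
  have hkd : k < d := hi.trans_lt i.2
  have hle := hk.2.1
  rw [extVal, dif_pos hkd] at hle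
  exact (hsort (show (⟨k, hkd⟩ : Fin d) ≤ i from hi)).trans hle

theorem tailSum_div_lt (hk : IsKIndex lam s k) (hsort : Antitone lam) {i : Fin d}
    (hi : (i : ℕ) < k) : tailSum lam k / ((s : ℝ) - k) < lam i := by
  obtain hk0 | hlt := hk.2.2
  · omega
  by_cases hk1d : k - 1 < d
  · rw [extVal, dif_pos hk1d] at hlt
    exact hlt.trans_le (hsort (show i ≤ ⟨k - 1, hk1d⟩ from Fin.le_def.2 (by
      show (i : ℕ) ≤ k - 1; omega)))
  -- past the end of `lam`, `extVal` is `0`: the two conditions would give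
  -- `0 ≤ tailSum lam k / (s - k) < 0`
  have hle := hk.2.1
  rw [extVal, dif_neg (by omega)] at hle
  rw [extVal, dif_neg hk1d] at hlt
  linarith

end IsKIndex

def objective {d : ℕ} (s : ℕ) (lam beta : Fin d → ℝ) : ℝ :=
  - (∑ i ∈ univ.filter (fun i : Fin d => (i : ℕ) < s), Real.log (beta i))
    + ∑ i, lam i * beta i

section Objective

variable {d s k : ℕ} {lam : Fin d → ℝ} {c : ℝ}

theorem card_filter_val_lt_eq {n : ℕ} (h : n ≤ d) :
    (#(univ.filter (fun i : Fin d => (i : ℕ) < n)) : ℝ) = n := by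
  rw [Fin.card_filter_val_lt, min_eq_right h]

theorem card_filter_Ico_eq (hks : k ≤ s) (hsd : s ≤ d) :
    (#(univ.filter (fun i : Fin d => k ≤ (i : ℕ) ∧ (i : ℕ) < s)) : ℝ) = (s : ℝ) - k := by
  have h := Fin.sum_filter_val_lt_eq_add hks (fun _ : Fin d => (1 : ℝ))
  simp only [sum_const, nsmul_one] at h
  rw [card_filter_val_lt_eq hsd, card_filter_val_lt_eq (hks.trans hsd)] at h
  linarith

theorem le_objective (hks : k < s) (hsd : s ≤ d) (hnonneg : ∀ i, 0 ≤ lam i)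
    (hlow : ∀ i : Fin d, (i : ℕ) < k → 0 < lam i)
    (hhigh : ∀ i : Fin d, k ≤ (i : ℕ) → lam i ≤ c) (hc : 0 < c)
    (hmass : tailSum lam k = c * ((s : ℝ) - k)) {beta : Fin d → ℝ} (hbeta : ∀ i, 0 < beta i)
    (hmono : Monotone beta) :
    Real.log (∏ i ∈ univ.filter (fun i : Fin d => (i : ℕ) < k), lam i)
        + ((s : ℝ) - k) * Real.log c + s ≤ objective s lam beta := by
  set A := univ.filter (fun i : Fin d => (i : ℕ) < k)
  set B := univ.filter (fun i : Fin d => k ≤ (i : ℕ) ∧ (i : ℕ) < s)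
  set C := univ.filter (fun i : Fin d => s ≤ (i : ℕ))
  have hA := sum_log_add_card_le_sum_mul A (fun i hi => hlow i (mem_filter.1 hi).2)
    (fun i _ => hbeta i)
  have hB := sum_log_add_card_le_sum_mul B (a := fun _ => c) (fun _ _ => hc)
    (fun i _ => hbeta i)
  have htransfer :
      c * ∑ i ∈ B, beta i ≤ ∑ i ∈ B, lam i * beta i + ∑ i ∈ C, lam i * beta i := by
    refine mul_sum_le_sum_mul_add_sum_mul (M := beta ⟨s - 1, by omega⟩)
      (fun i hi => hhigh i (mem_filter.1 hi).2.1) (fun i _ => hnonneg i)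
      (fun i hi => hmono (Fin.le_def.2 ?_)) (fun i hi => hmono (Fin.le_def.2 ?_)) ?_
    · have := (mem_filter.1 hi).2.2
      show (i : ℕ) ≤ s - 1
      omega
    · have := (mem_filter.1 hi).2
      show s - 1 ≤ (i : ℕ)
      omega
    · rw [← Fin.sum_filter_le_val_eq_add hks.le, card_filter_Ico_eq hks.le hsd, mul_comm]
      exact hmass
  rw [card_filter_val_lt_eq (hks.le.trans hsd)] at hA
  rw [sum_const, nsmul_eq_mul, card_filter_Ico_eq hks.le hsd, ← mul_sum] at hB
  rw [objective, Fin.sum_filter_val_lt_eq_add hks.le, Fin.sum_eq_sum_filter_val_lt_add k,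
    Fin.sum_filter_le_val_eq_add hks.le, Real.log_prod fun i hi => (hlow i (mem_filter.1 hi).2).ne']
  linarith

def betaStar (lam : Fin d → ℝ) (k : ℕ) (c : ℝ) : Fin d → ℝ :=
  fun i => if (i : ℕ) < k then 1 / lam i else 1 / c

theorem betaStar_pos (hc : 0 < c) (hlow : ∀ i : Fin d, (i : ℕ) < k → 0 < lam i) (i : Fin d) :
    0 < betaStar lam k c i := by
  unfold betaStar
  split_ifs with hi
  · exact one_div_pos.2 (hlow i hi)
  · exact one_div_pos.2 hc

theorem monotone_betaStar (hsort : Antitone lam) (hc : 0 < c)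
    (hlow : ∀ i : Fin d, (i : ℕ) < k → c < lam i) : Monotone (betaStar lam k c) := by
  intro i j hij
  have hij' : (i : ℕ) ≤ j := hij
  unfold betaStar
  split_ifs with hi hj hj
  · exact one_div_le_one_div_of_le (hc.trans (hlow j hj)) (hsort hij)
  · exact one_div_le_one_div_of_le hc (hlow i hi).le
  · omega
  · exact le_rfl

theorem objective_betaStar (hks : k ≤ s) (hsd : s ≤ d) (hc : 0 < c)
    (hlow : ∀ i : Fin d, (i : ℕ) < k → 0 < lam i)
    (hmass : tailSum lam k = c * ((s : ℝ) - k)) :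
    objective s lam (betaStar lam k c)
      = Real.log (∏ i ∈ univ.filter (fun i : Fin d => (i : ℕ) < k), lam i)
        + ((s : ℝ) - k) * Real.log c + s := by
  set A := univ.filter (fun i : Fin d => (i : ℕ) < k)
  set B := univ.filter (fun i : Fin d => k ≤ (i : ℕ) ∧ (i : ℕ) < s)
  set K := univ.filter (fun i : Fin d => k ≤ (i : ℕ))
  have hlogA : ∑ i ∈ A, Real.log (betaStar lam k c i) = - ∑ i ∈ A, Real.log (lam i) := by
    rw [← sum_neg_distrib]
    refine sum_congr rfl fun i hi => ?_
    simp only [betaStar, if_pos (mem_filter.1 hi).2, one_div, Real.log_inv]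
  have hlogB : ∑ i ∈ B, Real.log (betaStar lam k c i) = ((s : ℝ) - k) * -Real.log c := by
    rw [← card_filter_Ico_eq hks hsd, ← nsmul_eq_mul, ← sum_const]
    refine sum_congr rfl fun i hi => ?_
    simp only [betaStar, if_neg (not_lt.2 (mem_filter.1 hi).2.1), one_div, Real.log_inv]
  have hmulA : ∑ i ∈ A, lam i * betaStar lam k c i = k := by
    rw [← card_filter_val_lt_eq (hks.trans hsd), ← nsmul_one, ← sum_const]
    refine sum_congr rfl fun i hi => ?_
    rw [betaStar, if_pos (mem_filter.1 hi).2, mul_one_div_cancel (hlow i (mem_filter.1 hi).2).ne']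
  have hmulK : ∑ i ∈ K, lam i * betaStar lam k c i = (s : ℝ) - k := by
    have : ∀ i ∈ K, lam i * betaStar lam k c i = lam i * (1 / c) := fun i hi => by
      rw [betaStar, if_neg (not_lt.2 (mem_filter.1 hi).2)]
    rw [sum_congr rfl this, ← sum_mul, ← tailSum, hmass]
    field_simp
  rw [objective, Fin.sum_filter_val_lt_eq_add hks, Fin.sum_eq_sum_filter_val_lt_add k, hlogA,
    hlogB, hmulA, hmulK, Real.log_prod fun i hi => (hlow i (mem_filter.1 hi).2).ne']
  ring

end Objective

theorem stmt_5_general (d s r : ℕ) (hsr : s ≤ r) (hrd : r ≤ d)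
    (lam : Fin d → ℝ) (hsort : Antitone lam)
    (hpos : ∀ i : Fin d, (i : ℕ) < r → 0 < lam i)
    (hzero : ∀ i : Fin d, r ≤ (i : ℕ) → lam i = 0)
    (k : ℕ) (hk : IsKIndex lam s k) :
    (∀ beta : Fin d → ℝ, (∀ i, 0 < beta i) → Monotone beta →
      Real.log (∏ i ∈ Finset.univ.filter (fun i : Fin d => (i : ℕ) < k), lam i)
          + ((s : ℝ) - k) * Real.log (tailSum lam k / ((s : ℝ) - k)) + s
        ≤ - (∑ i ∈ Finset.univ.filter (fun i : Fin d => (i : ℕ) < s), Real.log (beta i))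
          + ∑ i, lam i * beta i) ∧
    (let betastar : Fin d → ℝ := fun i =>
        if (i : ℕ) < k then 1 / lam i else ((s : ℝ) - k) / tailSum lam k
     (∀ i, 0 < betastar i) ∧ Monotone betastar ∧
      - (∑ i ∈ Finset.univ.filter (fun i : Fin d => (i : ℕ) < s), Real.log (betastar i))
          + ∑ i, lam i * betastar i
        = Real.log (∏ i ∈ Finset.univ.filter (fun i : Fin d => (i : ℕ) < k), lam i)
          + ((s : ℝ) - k) * Real.log (tailSum lam k / ((s : ℝ) - k)) + s) := by
  set c := tailSum lam k / ((s : ℝ) - k)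
  have hks := hk.1
  have hsd : s ≤ d := hsr.trans hrd
  have hnonneg : ∀ i, 0 ≤ lam i := fun i =>
    (lt_or_ge (i : ℕ) r).elim (fun h => (hpos i h).le) fun h => (hzero i h).ge
  have hc : 0 < c := div_pos (tailSum_pos hnonneg (i := ⟨k, by omega⟩) le_rfl
    (hpos _ (show k < r by omega))) hk.sub_pos
  have hmass : tailSum lam k = c * ((s : ℝ) - k) := (div_mul_cancel₀ _ hk.sub_pos.ne').symm
  have hlow : ∀ i : Fin d, (i : ℕ) < k → 0 < lam i := fun i hi =>
    hc.trans (hk.tailSum_div_lt hsort hi)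
  refine ⟨fun beta hbeta hmono =>
    le_objective hks hsd hnonneg hlow (fun i => hk.le_tailSum_div hsort) hc hmass hbeta hmono, ?_⟩
  intro betastar
  have hbetaStar : betastar = betaStar lam k c := by
    funext i
    simp only [betastar, betaStar, c, one_div_div]
  rw [hbetaStar]
  exact ⟨betaStar_pos hc hlow, monotone_betaStar hsort hc (fun i => hk.tailSum_div_lt hsort),
    objective_betaStar hks.le hsd hc hlow hmass⟩

/-- With `λ₁ ≥ ⋯ ≥ λ_r > λ_{r+1} = ⋯ = λ_d = 0`, `s ≤ r ≤ d`,
and `k = k(λ,s)`: (a) every positive nondecreasing `β` satisfies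
`−∑_{i≤s} log βᵢ + ∑ λᵢβᵢ ≥ Γ_s + s`, and (b) the explicit `β*` attains equality. -/
theorem stmt_5 (d s r : ℕ) (hs1 : 1 ≤ s) (hsr : s ≤ r) (hrd : r ≤ d)
    (lam : Fin d → ℝ) (hsort : Antitone lam)
    (hpos : ∀ i : Fin d, (i : ℕ) < r → 0 < lam i)
    (hzero : ∀ i : Fin d, r ≤ (i : ℕ) → lam i = 0)
    (k : ℕ) (hk : IsKIndex lam s k) :
    (∀ beta : Fin d → ℝ, (∀ i, 0 < beta i) → Monotone beta →
      Real.log (∏ i ∈ Finset.univ.filter (fun i : Fin d => (i : ℕ) < k), lam i)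
          + ((s : ℝ) - k) * Real.log (tailSum lam k / ((s : ℝ) - k)) + s
        ≤ - (∑ i ∈ Finset.univ.filter (fun i : Fin d => (i : ℕ) < s), Real.log (beta i))
          + ∑ i, lam i * beta i) ∧
    (let betastar : Fin d → ℝ := fun i =>
        if (i : ℕ) < k then 1 / lam i else ((s : ℝ) - k) / tailSum lam k
     (∀ i, 0 < betastar i) ∧ Monotone betastar ∧
      - (∑ i ∈ Finset.univ.filter (fun i : Fin d => (i : ℕ) < s), Real.log (betastar i))
          + ∑ i, lam i * betastar i
        = Real.log (∏ i ∈ Finset.univ.filter (fun i : Fin d => (i : ℕ) < k), lam i)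
          + ((s : ℝ) - k) * Real.log (tailSum lam k / ((s : ℝ) - k)) + s) :=
  stmt_5_general d s r hsr hrd lam hsort hpos hzero k hk
end
end

section
/- Let V be a d×n real matrix with columns v_1,…,v_n, let s be an integer with 1 ≤ s ≤ d, and let x̂ ∈ ℝⁿ with x̂_i ≥ 0 for all i. Let λ₁ ≥ ⋯ ≥ λ_d ≥ 0 be the eigenvalues of X̂ = ∑_{i=1}^n x̂_i v_i v_iᵀ and let k = k(λ,s). Then ∑_{S ⊆ {1,…,n}, |S| = s} (∏_{i∈S} x̂_i) · det(V_Sᵀ V_S) ≥ (∏_{i=1}^k λ_i) · ((1/(s−k)) ∑_{i=k+1}^d λ_i)^{s−k}, where V_S is the d×s submatrix of V with columns indexed by S. -/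
open Matrix Finset

noncomputable section

/-!
Since `X̂ = V diag(x̂) Vᵀ`, comparing the coefficients of `t ^ s` in
`det (1 + t X̂) = det (1 + t Vᵀ V diag(x̂))` identifies the left-hand side with the elementary
symmetric function `e_s(λ)`. Keeping the `k` largest eigenvalues,
`e_s(λ) ≥ λ₁ ⋯ λ_k · e_{s-k}(λ_{k+1}, …, λ_d)`, and the choice of `k` puts the tail eigenvalues
in `[0, c]` with sum `(s - k) c`, where `c = (1/(s-k)) ∑_{i>k} λ_i`. For such numbers
`e_{s-k} ≥ c ^ (s - k)`: after scaling to `c = 1` this follows from `e_{r+1}(μ) ≥ ∑ μ - r`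
for `μ ∈ [0, 1]`, proved by adding one number at a time.
-/

namespace Multiset

variable {R : Type*} [CommSemiring R]

theorem esymm_zero_right (s : Multiset R) : s.esymm 0 = 1 := by
  simp [esymm, powersetCard_zero_left]

theorem esymm_cons_succ (a : R) (s : Multiset R) (n : ℕ) :
    (a ::ₘ s).esymm (n + 1) = s.esymm (n + 1) + a * s.esymm n := by
  simp [esymm, powersetCard_cons, sum_map_mul_left]

theorem esymm_nonneg [PartialOrder R] [IsOrderedRing R] {s : Multiset R} (hs : ∀ x ∈ s, 0 ≤ x)
    (n : ℕ) : 0 ≤ s.esymm n :=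
  sum_nonneg fun _ hp => by
    obtain ⟨t, ht, rfl⟩ := mem_map.mp hp
    exact prod_nonneg fun x hx => hs x (mem_of_le (mem_powersetCard.mp ht).1 hx)

theorem prod_mul_esymm_le_esymm_add [PartialOrder R] [IsOrderedRing R] {s t : Multiset R}
    (hs : ∀ x ∈ s, 0 ≤ x) (ht : ∀ x ∈ t, 0 ≤ x) (r : ℕ) :
    s.prod * t.esymm r ≤ (s + t).esymm (card s + r) := by
  induction s using Multiset.induction_on with
  | empty => simp
  | cons a s ih =>
    have ha := hs a (mem_cons_self a s)
    have hs' : ∀ x ∈ s, 0 ≤ x := fun x hx => hs x (mem_cons_of_mem hx)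
    have hst : ∀ x ∈ s + t, 0 ≤ x := by
      simp only [mem_add]; rintro x (hx | hx) <;> [exact hs' x hx; exact ht x hx]
    rw [prod_cons, card_cons, cons_add, add_right_comm, esymm_cons_succ, mul_assoc]
    exact (mul_le_mul_of_nonneg_left (ih hs') ha).trans
      (le_add_of_nonneg_left (esymm_nonneg hst _))

theorem sum_sub_le_esymm_succ {s : Multiset ℝ} (hs : ∀ x ∈ s, 0 ≤ x ∧ x ≤ 1) (r : ℕ) :
    s.sum - r ≤ s.esymm (r + 1) := by
  induction s using Multiset.induction_on generalizing r with
  | empty => simp [esymm, powersetCard_zero_right]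
  | cons a s ih =>
    have ha := hs a (mem_cons_self a s)
    have hs' : ∀ x ∈ s, 0 ≤ x ∧ x ≤ 1 := fun x hx => hs x (mem_cons_of_mem hx)
    rw [esymm_cons_succ, sum_cons]
    rcases r with _ | m
    · have h0 := ih hs' 0
      rw [esymm_zero_right]
      push_cast at h0 ⊢
      linarith
    · have h1 := ih hs' m
      have h2 := ih hs' (m + 1)
      have h3 := esymm_nonneg (fun x hx => (hs' x hx).1) (m + 1 + 1)
      push_cast at h2 ⊢
      have ha_mul := mul_le_mul_of_nonneg_left h1 ha.1
      -- if `∑ s ≥ m + 1` then `e_{m+1}(s) ≥ 1`; otherwise `(1 - a) (m + 1 - ∑ s) ≥ 0` suffices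
      by_cases hS : (m : ℝ) + 1 ≤ s.sum
      · nlinarith
      · nlinarith [mul_nonneg (sub_nonneg.2 ha.2) (sub_nonneg.2 (not_le.1 hS).le)]

theorem pow_le_esymm {s : Multiset ℝ} {c : ℝ} (hc : 0 ≤ c) (hs : ∀ x ∈ s, 0 ≤ x ∧ x ≤ c)
    {r : ℕ} (hsum : r * c ≤ s.sum) : c ^ r ≤ s.esymm r := by
  rcases r with _ | r
  · rw [pow_zero, esymm_zero_right]
  rcases hc.eq_or_lt with rfl | hc
  · rw [zero_pow r.succ_ne_zero]
    exact esymm_nonneg (fun x hx => (hs x hx).1) _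
  have hscaled : ∀ x ∈ s.map (c⁻¹ • ·), 0 ≤ x ∧ x ≤ 1 := by
    simp only [mem_map, smul_eq_mul]
    rintro _ ⟨x, hx, rfl⟩
    exact ⟨by have := (hs x hx).1; positivity, by rw [inv_mul_le_one₀ hc]; exact (hs x hx).2⟩
  have key := sum_sub_le_esymm_succ hscaled r
  rw [← smul_sum, ← pow_smul_esymm, smul_eq_mul, smul_eq_mul, inv_pow, ← div_eq_inv_mul,
    ← div_eq_inv_mul, le_div_iff₀ (by positivity)] at key
  have hr : (r : ℝ) + 1 ≤ s.sum / c := by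
    rw [le_div_iff₀ hc]; exact_mod_cast hsum
  nlinarith [pow_pos hc (r + 1)]

end Multiset

namespace Matrix

theorem sum_smul_vecMulVec_eq_mul_diagonal_mul_transpose {R m n : Type*} [CommRing R] [Fintype n]
    [DecidableEq n] (V : Matrix m n R) (x : n → R) :
    ∑ i, x i • vecMulVec (fun a => V a i) (fun a => V a i) = V * diagonal x * Vᵀ := by
  ext a b
  rw [mul_apply]
  simp only [sum_apply, smul_apply, vecMulVec_apply, smul_eq_mul, mul_diagonal, transpose_apply]
  exact sum_congr rfl fun i _ => by ring

variable {R : Type*} [CommRing R] {m n : Type*} [Fintype m] [Fintype n] [DecidableEq m]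
  [DecidableEq n]

theorem sum_det_submatrix_mul_comm (A : Matrix m n R) (B : Matrix n m R) (k : ℕ) :
    ∑ S ∈ univ.powersetCard k, ((A * B).submatrix (Subtype.val : S → m) Subtype.val).det =
      ∑ T ∈ univ.powersetCard k, ((B * A).submatrix (Subtype.val : T → n) Subtype.val).det := by
  rw [← coeff_det_one_add_X_smul_eq_sum_minors, ← coeff_det_one_add_X_smul_eq_sum_minors,
    Matrix.map_mul, Matrix.map_mul, ← smul_mul, det_one_add_mul_comm, Matrix.mul_smul]

theorem sum_det_submatrix_conj_of_mul_transpose_eq_one {Q : Matrix m m R} (hQ : Q * Qᵀ = 1)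
    (M : Matrix m m R) (k : ℕ) :
    ∑ S ∈ univ.powersetCard k, ((Q * M * Qᵀ).submatrix (Subtype.val : S → m) Subtype.val).det =
      ∑ S ∈ univ.powersetCard k, (M.submatrix (Subtype.val : S → m) Subtype.val).det := by
  rw [sum_det_submatrix_mul_comm, ← Matrix.mul_assoc, mul_eq_one_comm.mp hQ, Matrix.one_mul]

theorem sum_det_submatrix_diagonal (f : m → R) (k : ℕ) :
    ∑ S ∈ univ.powersetCard k, ((diagonal f).submatrix (Subtype.val : S → m) Subtype.val).det =
      (univ.val.map f).esymm k := by
  rw [esymm_map_val]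
  refine sum_congr rfl fun S _ => ?_
  rw [submatrix_diagonal _ _ Subtype.val_injective, det_diagonal]
  exact prod_coe_sort S f

theorem det_submatrix_mul_diagonal (M : Matrix n n R) (x : n → R) (S : Finset n) :
    ((M * diagonal x).submatrix (Subtype.val : S → n) Subtype.val).det =
      (∏ i ∈ S, x i) * (M.submatrix (Subtype.val : S → n) Subtype.val).det := by
  have : (M * diagonal x).submatrix (Subtype.val : S → n) Subtype.val =
      M.submatrix Subtype.val Subtype.val * diagonal (fun i : S => x i) := by
    ext i j; simp [mul_diagonal]
  rw [this, det_mul, det_diagonal, prod_coe_sort S x, mul_comm]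

end Matrix

theorem sum_prod_mul_det_submatrix_gram_eq_esymm {m n : Type*} [Fintype m] [Fintype n]
    [DecidableEq m] [DecidableEq n] (V : Matrix m n ℝ) (x : n → ℝ) (lam : m → ℝ)
    (hdecomp : IsSpectralDecomp (∑ i, x i • vecMulVec (fun a => V a i) (fun a => V a i)) lam)
    (s : ℕ) :
    ∑ S ∈ univ.powersetCard s,
        (∏ i ∈ S, x i) * ((Vᵀ * V).submatrix (Subtype.val : S → n) Subtype.val).det =
      (univ.val.map lam).esymm s := by
  obtain ⟨Q, hQ, hX⟩ := hdecomp
  rw [sum_smul_vecMulVec_eq_mul_diagonal_mul_transpose] at hX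
  calc _ = ∑ S ∈ univ.powersetCard s,
        ((Vᵀ * (V * diagonal x)).submatrix (Subtype.val : S → n) Subtype.val).det := by
          simp only [← Matrix.mul_assoc, det_submatrix_mul_diagonal]
    _ = ∑ T ∈ univ.powersetCard s,
        ((V * diagonal x * Vᵀ).submatrix (Subtype.val : T → m) Subtype.val).det :=
          (sum_det_submatrix_mul_comm _ _ s).symm
    _ = _ := by
      rw [hX, sum_det_submatrix_conj_of_mul_transpose_eq_one hQ, sum_det_submatrix_diagonal]

theorem prod_head_mul_pow_le_esymm {d s k : ℕ} (lam : Fin d → ℝ) (hsort : Antitone lam)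
    (hnn : ∀ i, 0 ≤ lam i) (hks : k < s) (hsd : s ≤ d)
    (hk : extVal lam k ≤ tailSum lam k / ((s : ℝ) - k)) :
    (∏ i ∈ univ.filter (fun i : Fin d => (i : ℕ) < k), lam i)
        * (tailSum lam k / ((s : ℝ) - k)) ^ (s - k) ≤ (univ.val.map lam).esymm s := by
  set K := univ.filter (fun i : Fin d => (i : ℕ) < k)
  set T := univ.filter (fun i : Fin d => k ≤ (i : ℕ))
  set c := tailSum lam k / ((s : ℝ) - k)
  have hkd : k < d := hks.trans_le hsd
  have hsk : (0 : ℝ) < s - k := sub_pos.2 (by exact_mod_cast hks)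
  have hc : 0 ≤ c := div_nonneg (sum_nonneg fun i _ => hnn i) hsk.le
  have hsplit : univ.val.map lam = K.val.map lam + T.val.map lam := by
    conv_lhs => rw [← Multiset.filter_add_not (fun i : Fin d => (i : ℕ) < k) univ.val]
    simp only [K, T, Multiset.map_add, filter_val, not_lt]
  have hKcard : K.card = k := by
    simp only [K, Fin.card_filter_val_lt]; omega
  have htail_mem : ∀ x ∈ T.val.map lam, 0 ≤ x ∧ x ≤ c := by
    simp only [Multiset.mem_map, mem_val, T, mem_filter, mem_univ, true_and]
    rintro _ ⟨i, hi, rfl⟩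
    refine ⟨hnn i, le_trans (hsort ?_) ((dif_pos hkd).symm.le.trans hk)⟩
    exact Fin.mk_le_of_le_val hi
  have htail_sum : ((s - k : ℕ) : ℝ) * c ≤ (T.val.map lam).sum := by
    rw [sum_map_val, Nat.cast_sub hks.le, mul_div_cancel₀ _ hsk.ne']
    rfl
  calc K.prod lam * c ^ (s - k) ≤ (K.val.map lam).prod * (T.val.map lam).esymm (s - k) := by
        rw [prod_map_val]
        exact mul_le_mul_of_nonneg_left (Multiset.pow_le_esymm hc htail_mem htail_sum)
          (prod_nonneg fun i _ => hnn i)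
    _ ≤ (K.val.map lam + T.val.map lam).esymm (Multiset.card (K.val.map lam) + (s - k)) :=
        Multiset.prod_mul_esymm_le_esymm_add (by simp [hnn]) (by simp [hnn]) _
    _ = _ := by rw [← hsplit, Multiset.card_map, card_val, hKcard, Nat.add_sub_cancel' hks.le]

theorem stmt_8_general (d n s : ℕ) (hsd : s ≤ d)
    (V : Matrix (Fin d) (Fin n) ℝ)
    (x : Fin n → ℝ)
    (lam : Fin d → ℝ) (hsort : Antitone lam) (hnn : ∀ i, 0 ≤ lam i)
    (hdecomp : IsSpectralDecomp
      (∑ i, x i • vecMulVec (fun a => V a i) (fun a => V a i)) lam)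
    (k : ℕ) (hk : IsKIndex lam s k) :
    (∏ i ∈ Finset.univ.filter (fun i : Fin d => (i : ℕ) < k), lam i)
        * (tailSum lam k / ((s : ℝ) - k)) ^ (s - k)
      ≤ ∑ S ∈ Finset.univ.powersetCard s,
          (∏ i ∈ S, x i) * (subSub (Vᵀ * V) S).det := by
  exact (prod_head_mul_pow_le_esymm lam hsort hnn hk.1 hsd hk.2.1).trans_eq
    (sum_prod_mul_det_submatrix_gram_eq_esymm V x lam hdecomp s).symm

/-- For any nonnegative `x̂ ∈ ℝⁿ`,
`∑_{|S|=s} (∏_{i∈S} x̂ᵢ) det(V_Sᵀ V_S) ≥ exp(Γ_s(∑ x̂ᵢ vᵢvᵢᵀ))`. -/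
theorem stmt_8 (d n s : ℕ) (hs1 : 1 ≤ s) (hsd : s ≤ d)
    (V : Matrix (Fin d) (Fin n) ℝ)
    (x : Fin n → ℝ) (hx0 : ∀ i, 0 ≤ x i)
    (lam : Fin d → ℝ) (hsort : Antitone lam) (hnn : ∀ i, 0 ≤ lam i)
    (hdecomp : IsSpectralDecomp
      (∑ i, x i • vecMulVec (fun a => V a i) (fun a => V a i)) lam)
    (k : ℕ) (hk : IsKIndex lam s k) :
    (∏ i ∈ Finset.univ.filter (fun i : Fin d => (i : ℕ) < k), lam i)
        * (tailSum lam k / ((s : ℝ) - k)) ^ (s - k)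
      ≤ ∑ S ∈ Finset.univ.powersetCard s,
          (∏ i ∈ S, x i) * (subSub (Vᵀ * V) S).det :=
  stmt_8_general d n s hsd V x lam hsort hnn hdecomp k hk
end
end

section
/- Let C = VᵀV be an n×n real positive semidefinite matrix of rank d, where V is a d×n real matrix with columns v_1,…,v_n, and let s be an integer with 1 ≤ s ≤ d. Assume δ := min_{|T| = s} λ_min(C_{T,T}) > 0, and let λ_max(C) denote the largest eigenvalue of C. Let Ŝ ⊆ {1,…,n} with |Ŝ| = s be locally optimal (for every i ∈ Ŝ and j ∉ Ŝ, det(C_{Ŝ∪{j}∖{i}, Ŝ∪{j}∖{i}}) ≤ det(C_{Ŝ,Ŝ})) and suppose additionally that v_iᵀ v_j = 0 for every pair (i,j) ∈ Ŝ × ({1,…,n}∖Ŝ). Then for every subset S ⊆ {1,…,n} with |S| = s, det(C_{S,S}) ≤ (min{ λ_max(C)/δ, (λ_max(C)/(s·δ))·(n−s) − n/s + 2 })^s · det(C_{Ŝ,Ŝ}). -/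
/-!
Orthogonality makes `C = VᵀV` block diagonal with respect to `Ŝ` and its complement. For
`|S| = s` let `A = S ∩ Ŝ` and `r = |S \ Ŝ| = |Ŝ \ S|`. Then `det C_S = det C_A · det C_{S∖Ŝ}` and
`det C_{S∖Ŝ} ≤ L^r`, while the Schur complement of `C_A` in `C_Ŝ` has all eigenvalues `≥ δ`, so
`δ^r det C_A ≤ det C_Ŝ`. Hence `det C_S ≤ (L/δ)^r det C_Ŝ`. Finally, for `t = L/δ ≥ 1`,
Bernoulli's inequality `t^(r/s) ≤ (r t + s - r)/s` together with `r ≤ s` and `r ≤ n - s` bounds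
`t^r` by the `s`-th power of both terms of the minimum.
-/

open Matrix Finset

noncomputable section

open Function

section QuadraticForm

variable {m n R : Type*} [Fintype m] [Fintype n]

theorem extend_zero_dotProduct [NonUnitalNonAssocSemiring R] {f : m → n} (hf : Injective f)
    (y : m → R) (w : n → R) : extend f y 0 ⬝ᵥ w = y ⬝ᵥ (w ∘ f) :=
  (Fintype.sum_of_injective f hf _ _ (fun j hj => by simp [extend_apply' _ _ _ hj])
    (fun i => by simp [hf.extend_apply])).symm

theorem dotProduct_submatrix_mulVec [CommSemiring R] {f : m → n} (hf : Injective f)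
    (M : Matrix n n R) (y : m → R) :
    y ⬝ᵥ M.submatrix f f *ᵥ y = extend f y 0 ⬝ᵥ M *ᵥ extend f y 0 := by
  rw [extend_zero_dotProduct hf]
  congr 1
  ext a
  change (fun b => M (f a) (f b)) ⬝ᵥ y = M (f a) ⬝ᵥ extend f y 0
  rw [dotProduct_comm (M (f a)), extend_zero_dotProduct hf, dotProduct_comm]
  rfl

variable {f : m → n} {M : Matrix n n ℝ}

theorem dotProduct_submatrix_mulVec_le (hf : Injective f) {L : ℝ}
    (hL : ∀ x, x ⬝ᵥ M *ᵥ x ≤ L * (x ⬝ᵥ x)) (y : m → ℝ) :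
    y ⬝ᵥ M.submatrix f f *ᵥ y ≤ L * (y ⬝ᵥ y) := by
  simpa [dotProduct_submatrix_mulVec hf, extend_zero_dotProduct hf, extend_comp hf] using
    hL (extend f y 0)

theorem le_dotProduct_submatrix_mulVec (hf : Injective f) {δ : ℝ}
    (hδ : ∀ x, δ * (x ⬝ᵥ x) ≤ x ⬝ᵥ M *ᵥ x) (y : m → ℝ) :
    δ * (y ⬝ᵥ y) ≤ y ⬝ᵥ M.submatrix f f *ᵥ y := by
  simpa [dotProduct_submatrix_mulVec hf, extend_zero_dotProduct hf, extend_comp hf] using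
    hδ (extend f y 0)

end QuadraticForm

namespace Matrix.IsHermitian

variable {m : Type*} [Fintype m] [DecidableEq m] {M : Matrix m m ℝ} (hM : M.IsHermitian)

theorem eigenvalues_eq_dotProduct (i : m) :
    hM.eigenvalues i =
      (hM.eigenvectorBasis i : m → ℝ) ⬝ᵥ M *ᵥ (hM.eigenvectorBasis i : m → ℝ) := by
  simpa using hM.eigenvalues_eq i

theorem dotProduct_self_eigenvectorBasis (i : m) :
    (hM.eigenvectorBasis i : m → ℝ) ⬝ᵥ (hM.eigenvectorBasis i : m → ℝ) = 1 := by
  have h := EuclideanSpace.inner_eq_star_dotProduct (hM.eigenvectorBasis i) (hM.eigenvectorBasis i)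
  rw [real_inner_self_eq_norm_sq, hM.eigenvectorBasis.orthonormal.1 i] at h
  simpa using h.symm

theorem le_eigenvalues {δ : ℝ} (hδ : ∀ y, δ * (y ⬝ᵥ y) ≤ y ⬝ᵥ M *ᵥ y) (i : m) :
    δ ≤ hM.eigenvalues i := by
  simpa [dotProduct_self_eigenvectorBasis, ← eigenvalues_eq_dotProduct] using
    hδ (hM.eigenvectorBasis i)

theorem eigenvalues_le {L : ℝ} (hL : ∀ y, y ⬝ᵥ M *ᵥ y ≤ L * (y ⬝ᵥ y)) (i : m) :
    hM.eigenvalues i ≤ L := by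
  simpa [dotProduct_self_eigenvectorBasis, ← eigenvalues_eq_dotProduct] using
    hL (hM.eigenvectorBasis i)

theorem det_eq_prod_eigenvalues_real : M.det = ∏ i, hM.eigenvalues i := by
  simpa using hM.det_eq_prod_eigenvalues

end Matrix.IsHermitian

theorem Matrix.IsHermitian.pow_card_le_det {m : Type*} [Fintype m] [DecidableEq m]
    {M : Matrix m m ℝ} (hM : M.IsHermitian) {δ : ℝ} (hδ0 : 0 ≤ δ)
    (hδ : ∀ y, δ * (y ⬝ᵥ y) ≤ y ⬝ᵥ M *ᵥ y) :
    δ ^ Fintype.card m ≤ M.det := by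
  rw [hM.det_eq_prod_eigenvalues_real, ← Finset.card_univ, ← Finset.prod_const]
  exact Finset.prod_le_prod (fun _ _ => hδ0) fun i _ => hM.le_eigenvalues hδ i

theorem Matrix.PosSemidef.det_le_pow_card {m : Type*} [Fintype m] [DecidableEq m]
    {M : Matrix m m ℝ} (hM : M.PosSemidef) {L : ℝ}
    (hL : ∀ y, y ⬝ᵥ M *ᵥ y ≤ L * (y ⬝ᵥ y)) : M.det ≤ L ^ Fintype.card m := by
  rw [hM.isHermitian.det_eq_prod_eigenvalues_real, ← Finset.card_univ, ← Finset.prod_const]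
  exact Finset.prod_le_prod (fun i _ => hM.eigenvalues_nonneg i)
    fun i _ => hM.isHermitian.eigenvalues_le hL i

section SchurComplement

variable {α β : Type*} [Fintype α] [Fintype β] [DecidableEq α]

theorem le_dotProduct_schurComplement {A : Matrix α α ℝ} [Invertible A] (hA : A.IsHermitian)
    (B : Matrix α β ℝ) (D : Matrix β β ℝ) {δ : ℝ} (hδ : 0 ≤ δ)
    (h : ∀ z, δ * (z ⬝ᵥ z) ≤ z ⬝ᵥ fromBlocks A B Bᴴ D *ᵥ z) (y : β → ℝ) :
    δ * (y ⬝ᵥ y) ≤ y ⬝ᵥ (D - Bᴴ * A⁻¹ * B) *ᵥ y := by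
  set x := -((A⁻¹ * B) *ᵥ y)
  -- the Schur complement form is the form of the whole matrix at `(-A⁻¹ B y, y)`
  have hform : y ⬝ᵥ (D - Bᴴ * A⁻¹ * B) *ᵥ y =
      Sum.elim x y ⬝ᵥ fromBlocks A B Bᴴ D *ᵥ Sum.elim x y := by
    have := schur_complement_eq₁₁ B D x y hA
    simp only [star_trivial, x, neg_add_cancel, zero_vecMul, zero_dotProduct, zero_add] at this
    rw [dotProduct_mulVec, dotProduct_mulVec, this]
  have hx : 0 ≤ x ⬝ᵥ x := by simpa using dotProduct_star_self_nonneg x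
  calc δ * (y ⬝ᵥ y) ≤ δ * (x ⬝ᵥ x + y ⬝ᵥ y) := by gcongr; linarith
    _ = δ * (Sum.elim x y ⬝ᵥ Sum.elim x y) := by rw [sumElim_dotProduct_sumElim]
    _ ≤ _ := hform ▸ h _

theorem pow_card_mul_det_toBlocks₁₁_le_det [DecidableEq β] {M : Matrix (α ⊕ β) (α ⊕ β) ℝ}
    (hM : M.IsHermitian) {δ : ℝ} (hδ : 0 < δ) (h : ∀ z, δ * (z ⬝ᵥ z) ≤ z ⬝ᵥ M *ᵥ z) :
    δ ^ Fintype.card β * M.toBlocks₁₁.det ≤ M.det := by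
  obtain ⟨hA, hB, -, hD⟩ := isHermitian_fromBlocks_iff.mp ((fromBlocks_toBlocks M).symm ▸ hM)
  set A := M.toBlocks₁₁
  set B := M.toBlocks₁₂
  have hM' : M = fromBlocks A B Bᴴ M.toBlocks₂₂ := by rw [hB, fromBlocks_toBlocks]
  rw [hM'] at h ⊢
  have hdetA : 0 < A.det :=
    (pow_pos hδ _).trans_le <| hA.pow_card_le_det hδ.le <|
      le_dotProduct_submatrix_mulVec (M := fromBlocks A B Bᴴ _) Sum.inl_injective h
  have := A.invertibleOfIsUnitDet hdetA.ne'.isUnit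
  have hS : (M.toBlocks₂₂ - Bᴴ * A⁻¹ * B).IsHermitian :=
    hD.sub <| by simpa [Matrix.mul_assoc] using isHermitian_conjTranspose_mul_mul B hA.inv
  rw [det_fromBlocks₁₁, invOf_eq_nonsing_inv, mul_comm]
  gcongr
  exact hS.pow_card_le_det hδ.le (le_dotProduct_schurComplement hA _ _ hδ.le h)

end SchurComplement

section PrincipalSubmatrix

def Finset.subtypeEquivSumSdiff {γ : Type*} [DecidableEq γ] {A T : Finset γ} (hA : A ⊆ T) :
    T ≃ A ⊕ (T \ A : Finset γ) where
  toFun x := if h : x.1 ∈ A then .inl ⟨x.1, h⟩ else .inr ⟨x.1, mem_sdiff.2 ⟨x.2, h⟩⟩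
  invFun := Sum.elim (fun a => ⟨a.1, hA a.2⟩) fun b => ⟨b.1, (mem_sdiff.1 b.2).1⟩
  left_inv x := by by_cases h : x.1 ∈ A <;> simp [h]
  right_inv z := by
    rcases z with a | b
    · simp [a.2]
    · simp [(mem_sdiff.1 b.2).2]

variable {n : ℕ} {C : Matrix (Fin n) (Fin n) ℝ} {A T : Finset (Fin n)}

theorem det_subSub_eq_mul_of_subset (hA : A ⊆ T) (h0 : ∀ i ∈ A, ∀ j ∈ T \ A, C i j = 0) :
    (subSub C T).det = (subSub C A).det * (subSub C (T \ A)).det := by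
  let e := subtypeEquivSumSdiff hA
  have h12 : ((subSub C T).submatrix e.symm e.symm).toBlocks₁₂ = 0 := by
    ext a b
    exact h0 _ a.2 _ b.2
  rw [← det_submatrix_equiv_self e.symm, ← fromBlocks_toBlocks ((subSub C T).submatrix _ _), h12,
    det_fromBlocks_zero₁₂]
  rfl

theorem pow_card_sdiff_mul_det_subSub_le (hC : C.IsHermitian) (hA : A ⊆ T) {δ : ℝ} (hδ : 0 < δ)
    (h : ∀ y, δ * (y ⬝ᵥ y) ≤ y ⬝ᵥ subSub C T *ᵥ y) :
    δ ^ #(T \ A) * (subSub C A).det ≤ (subSub C T).det := by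
  let e := subtypeEquivSumSdiff hA
  have := pow_card_mul_det_toBlocks₁₁_le_det (M := (subSub C T).submatrix e.symm e.symm)
    ((hC.submatrix _).submatrix _) hδ (le_dotProduct_submatrix_mulVec e.symm.injective h)
  rwa [Fintype.card_coe, det_submatrix_equiv_self] at this

theorem det_subSub_le_pow_mul_det (hC : C.PosSemidef) {δ L : ℝ} (hδ : 0 < δ)
    (hδT : ∀ y, δ * (y ⬝ᵥ y) ≤ y ⬝ᵥ subSub C T *ᵥ y) (hL : ∀ y, y ⬝ᵥ C *ᵥ y ≤ L * (y ⬝ᵥ y))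
    (horth : ∀ i ∈ T, ∀ j ∉ T, C i j = 0) {S : Finset (Fin n)} (hST : #S = #T) :
    (subSub C S).det ≤ (L / δ) ^ #(S \ T) * (subSub C T).det := by
  have hPSD : ∀ U : Finset (Fin n), (subSub C U).PosSemidef := fun U => hC.submatrix _
  have hsplit : (subSub C S).det = (subSub C (S ∩ T)).det * (subSub C (S \ T)).det := by
    rw [det_subSub_eq_mul_of_subset inter_subset_left, sdiff_inter_self_left]
    intro i hi j hj
    exact horth i (mem_inter.1 hi).2 j (mem_sdiff.1 (sdiff_inter_self_left S T ▸ hj)).2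
  have hout : (subSub C (S \ T)).det ≤ L ^ #(S \ T) := by
    simpa using (hPSD _).det_le_pow_card (dotProduct_submatrix_mulVec_le Subtype.val_injective hL)
  have hschur : δ ^ #(S \ T) * (subSub C (S ∩ T)).det ≤ (subSub C T).det := by
    simpa [sdiff_inter_self_right, card_sdiff_comm hST.symm] using
      pow_card_sdiff_mul_det_subSub_le hC.isHermitian (inter_subset_right (s₁ := S)) hδ hδT
  have hLδ : 0 ≤ (L / δ) ^ #(S \ T) := by
    rw [div_pow]
    exact div_nonneg ((hPSD _).det_nonneg.trans hout) (by positivity)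
  calc (subSub C S).det ≤ (subSub C (S ∩ T)).det * L ^ #(S \ T) := by
        rw [hsplit]
        exact mul_le_mul_of_nonneg_left hout (hPSD _).det_nonneg
    _ = (L / δ) ^ #(S \ T) * (δ ^ #(S \ T) * (subSub C (S ∩ T)).det) := by
        rw [div_pow]
        field_simp
    _ ≤ (L / δ) ^ #(S \ T) * (subSub C T).det := mul_le_mul_of_nonneg_left hschur hLδ

end PrincipalSubmatrix

theorem pow_le_mean_pow {t : ℝ} (ht : 0 ≤ t) {r s : ℕ} (hrs : r ≤ s) (hs : 0 < s) :
    t ^ r ≤ ((r * t + (s - r)) / s) ^ s := by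
  have hs' : (0 : ℝ) < s := by exact_mod_cast hs
  have hbern := rpow_one_add_le_one_add_mul_self (s := t - 1) (by linarith)
    (p := r / s) (by positivity) (div_le_one_of_le₀ (by exact_mod_cast hrs) hs'.le)
  rw [add_sub_cancel] at hbern
  calc t ^ r = (t ^ ((r : ℝ) / s)) ^ s := by
        rw [← Real.rpow_natCast _ s, ← Real.rpow_mul ht, div_mul_cancel₀ _ hs'.ne',
          Real.rpow_natCast]
    _ ≤ (1 + r / s * (t - 1)) ^ s := by gcongr
    _ = ((r * t + (s - r)) / s) ^ s := by
        congr 1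
        field_simp
        ring

theorem pow_le_min_pow {t : ℝ} (ht : 1 ≤ t) {r s : ℕ} {m : ℝ} (hrs : r ≤ s) (hrm : r ≤ m)
    (hs : 0 < s) : t ^ r ≤ min t ((m * t + (s - m)) / s) ^ s := by
  rcases le_total t ((m * t + (s - m)) / s) with h | h
  · rw [min_eq_left h]
    exact pow_le_pow_right₀ ht hrs
  · rw [min_eq_right h]
    refine (pow_le_mean_pow (by linarith) hrs hs).trans (pow_le_pow_left₀ ?_ ?_ s)
    · have : (r : ℝ) ≤ s := by exact_mod_cast hrs
      positivity
    · exact div_le_div_of_nonneg_right (by nlinarith) (by positivity)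

theorem stmt_13_general (d n s : ℕ) (hs1 : 1 ≤ s)
    (V : Matrix (Fin d) (Fin n) ℝ)
    (δ L : ℝ) (hδpos : 0 < δ)
    (hδ : ∀ T : Finset (Fin n), T.card = s → ∀ y : {x // x ∈ T} → ℝ,
      δ * (y ⬝ᵥ y) ≤ y ⬝ᵥ (subSub (Vᵀ * V) T *ᵥ y))
    (hL : ∀ y : Fin n → ℝ, y ⬝ᵥ ((Vᵀ * V) *ᵥ y) ≤ L * (y ⬝ᵥ y))
    (Shat : Finset (Fin n)) (hcard : Shat.card = s)
    (horth : ∀ i ∈ Shat, ∀ j ∉ Shat, (fun a => V a i) ⬝ᵥ (fun a => V a j) = 0) :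
    ∀ S : Finset (Fin n), S.card = s →
      (subSub (Vᵀ * V) S).det ≤
        (min (L / δ) (L / ((s : ℝ) * δ) * ((n : ℝ) - s) - (n : ℝ) / (s : ℝ) + 2)) ^ s *
          (subSub (Vᵀ * V) Shat).det := by
  intro S hS
  have hC : (Vᵀ * V).PosSemidef := by
    simpa [conjTranspose_eq_transpose_of_trivial] using posSemidef_conjTranspose_mul_self V
  have hδL : δ ≤ L := by
    have hShat := (hC.submatrix ((↑) : Shat → Fin n)).isHermitian
    obtain ⟨i⟩ : Nonempty Shat := (card_pos.1 (hcard ▸ hs1)).to_subtype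
    exact (hShat.le_eigenvalues (hδ Shat hcard) i).trans
      (hShat.eigenvalues_le (dotProduct_submatrix_mulVec_le Subtype.val_injective hL) i)
  have hr : #(S \ Shat) + s ≤ n := by
    simpa [← hcard, card_sdiff_add_card] using card_le_univ (S ∪ Shat)
  have hkey := det_subSub_le_pow_mul_det hC hδpos (hδ Shat hcard) hL
    (fun i hi j hj => by simpa [mul_apply, dotProduct] using horth i hi j hj) (hS.trans hcard.symm)
  have hnum := pow_le_min_pow ((one_le_div hδpos).2 hδL) (m := n - s)
    (hS ▸ card_le_card sdiff_subset) (by rw [le_sub_iff_add_le]; exact_mod_cast hr) hs1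
  refine hkey.trans (mul_le_mul_of_nonneg_right (hnum.trans_eq ?_) (hC.submatrix _).det_nonneg)
  congr 2
  field_simp
  ring

/-- If in addition `vᵢᵀ vⱼ = 0` for every `i ∈ Ŝ`, `j ∉ Ŝ`, then a locally
optimal `Ŝ` satisfies `det(C_{S,S}) ≤ (min{L/δ, (L/(sδ))(n−s) − n/s + 2})^s det(C_{Ŝ,Ŝ})`,
where `δ > 0` is (a lower bound on) `min_{|T|=s} λ_min(C_{T,T})` and `L` is (an upper bound
on) `λ_max(C)`, both expressed through quadratic forms. -/
theorem stmt_13 (d n s : ℕ) (hs1 : 1 ≤ s) (hsd : s ≤ d)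
    (V : Matrix (Fin d) (Fin n) ℝ) (hrank : (Vᵀ * V).rank = d)
    (δ L : ℝ) (hδpos : 0 < δ)
    (hδ : ∀ T : Finset (Fin n), T.card = s → ∀ y : {x // x ∈ T} → ℝ,
      δ * (y ⬝ᵥ y) ≤ y ⬝ᵥ (subSub (Vᵀ * V) T *ᵥ y))
    (hL : ∀ y : Fin n → ℝ, y ⬝ᵥ ((Vᵀ * V) *ᵥ y) ≤ L * (y ⬝ᵥ y))
    (Shat : Finset (Fin n)) (hcard : Shat.card = s)
    (hloc : ∀ i ∈ Shat, ∀ j ∉ Shat,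
      (subSub (Vᵀ * V) (insert j (Shat.erase i))).det ≤ (subSub (Vᵀ * V) Shat).det)
    (horth : ∀ i ∈ Shat, ∀ j ∉ Shat, (fun a => V a i) ⬝ᵥ (fun a => V a j) = 0) :
    ∀ S : Finset (Fin n), S.card = s →
      (subSub (Vᵀ * V) S).det ≤
        (min (L / δ) (L / ((s : ℝ) * δ) * ((n : ℝ) - s) - (n : ℝ) / (s : ℝ) + 2)) ^ s *
          (subSub (Vᵀ * V) Shat).det :=
  stmt_13_general d n s hs1 V δ L hδpos hδ hL Shat hcard horth
end
end

section
/- Let Λ be a d×d real symmetric positive semidefinite matrix with eigenvalues β₁ ≤ ⋯ ≤ β_d, and let s be an integer with 1 ≤ s ≤ d. Then: (a) for every d×d real symmetric positive semidefinite matrix X whose s-th largest eigenvalue is positive, with eigenvalues λ₁ ≥ ⋯ ≥ λ_d ≥ 0, one has ∑_{i=1}^s 1/λ_i + tr(XΛ) ≥ 2 ∑_{i=1}^s √(β_i); and (b) if Λ is positive definite, there exists such an X attaining equality. (That is, min over X ⪰ 0 of tr^s(X^†) + tr(XΛ) equals 2·tr_s(Λ^{1/2}).) -/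
open Matrix Finset

noncomputable section

-- indicator helpers
lemma ds_key (d : ℕ) (f g : ℕ → ℝ) (D : ℕ → ℕ → ℝ)
    (hf : ∀ i j, i ≤ j → j < d → f j ≤ f i) (hf0 : ∀ i, i < d → 0 ≤ f i)
    (hg : ∀ i j, i ≤ j → j < d → g i ≤ g j) (hg0 : ∀ i, i < d → 0 ≤ g i)
    (hD0 : ∀ i j, 0 ≤ D i j)
    (hrow : ∀ i, i < d → ∑ j ∈ range d, D i j = 1)
    (hcol : ∀ j, j < d → ∑ i ∈ range d, D i j = 1) :
    ∑ i ∈ range d, f i * g i ≤ ∑ i ∈ range d, ∑ j ∈ range d, D i j * (f i * g j) := by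
  -- step functions
  set F : ℕ → ℝ := fun k => if k < d then f k else 0 with hF
  set G : ℕ → ℝ := fun l => if l = 0 then 0 else g (l-1) with hG
  set δ : ℕ → ℝ := fun k => F k - F (k+1) with hδ
  set ε : ℕ → ℝ := fun l => G (l+1) - G l with hε
  have hδ0 : ∀ k, k < d → 0 ≤ δ k := by
    intro k hk
    simp only [hδ, hF]
    by_cases h : k + 1 < d
    · simp [hk, h]; exact hf k (k+1) (Nat.le_succ k) h
    · simp [hk, h]; exact hf0 k hk
  have hε0 : ∀ l, l < d → 0 ≤ ε l := by
    intro l hl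
    simp only [hε, hG]
    rcases Nat.eq_zero_or_pos l with h | h
    · subst h; simp; exact hg0 0 hl
    · have : l ≠ 0 := h.ne'
      simp [this]
      exact hg (l-1) l (Nat.sub_le l 1) hl
  -- representation of f
  have hfrep : ∀ i, i < d → f i = ∑ k ∈ range d, (if i ≤ k then δ k else 0) := by
    intro i hi
    have h1 : ∑ k ∈ range d, (if i ≤ k then δ k else 0)
        = ∑ k ∈ Ico i d, δ k := by
      rw [← Finset.sum_filter]
      congr 1
      ext k
      simp [Finset.mem_filter, Finset.mem_Ico, and_comm]
    rw [h1]
    have h2 : ∑ k ∈ Ico i d, δ k = (∑ k ∈ range d, δ k) - ∑ k ∈ range i, δ k := by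
      rw [← Finset.sum_Ico_eq_sub _ hi.le]
    rw [h2]
    have t1 : ∑ k ∈ range d, δ k = F 0 - F d := Finset.sum_range_sub' F d
    have t2 : ∑ k ∈ range i, δ k = F 0 - F i := Finset.sum_range_sub' F i
    rw [t1, t2]
    have : F d = 0 := by simp [hF]
    have h3 : F i = f i := by simp [hF, hi]
    rw [this, h3]; ring
  have hgrep : ∀ j, j < d → g j = ∑ l ∈ range d, (if l ≤ j then ε l else 0) := by
    intro j hj
    have h1 : ∑ l ∈ range d, (if l ≤ j then ε l else 0)
        = ∑ l ∈ range (j+1), ε l := by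
      rw [← Finset.sum_filter]
      congr 1
      ext l
      simp [Finset.mem_filter, Nat.lt_succ_iff]
      intro h; omega
    rw [h1, Finset.sum_range_sub G (j+1)]
    simp [hG]
  -- expand both sides
  set N : ℕ → ℕ → ℝ := fun k l => ∑ i ∈ range d, (if i ≤ k ∧ l ≤ i then (1:ℝ) else 0) with hN
  set M : ℕ → ℕ → ℝ := fun k l =>
    ∑ i ∈ range d, ∑ j ∈ range d, D i j * (if i ≤ k ∧ l ≤ j then (1:ℝ) else 0) with hM
  have expandL : ∑ i ∈ range d, f i * g i
      = ∑ k ∈ range d, ∑ l ∈ range d, δ k * ε l * N k l := by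
    have step : ∀ i ∈ range d, f i * g i
        = ∑ k ∈ range d, ∑ l ∈ range d,
            δ k * ε l * (if i ≤ k ∧ l ≤ i then (1:ℝ) else 0) := by
      intro i hi
      rw [Finset.mem_range] at hi
      rw [hfrep i hi, hgrep i hi, Finset.sum_mul_sum]
      refine Finset.sum_congr rfl fun k _ => Finset.sum_congr rfl fun l _ => ?_
      by_cases h1 : i ≤ k <;> by_cases h2 : l ≤ i <;> simp [h1, h2]
    rw [Finset.sum_congr rfl step]
    rw [Finset.sum_comm]
    refine Finset.sum_congr rfl fun k _ => ?_
    rw [Finset.sum_comm]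
    refine Finset.sum_congr rfl fun l _ => ?_
    rw [hN, ← Finset.mul_sum]
  have expandR : ∑ i ∈ range d, ∑ j ∈ range d, D i j * (f i * g j)
      = ∑ k ∈ range d, ∑ l ∈ range d, δ k * ε l * M k l := by
    have step : ∀ i ∈ range d, ∀ j ∈ range d, D i j * (f i * g j)
        = ∑ k ∈ range d, ∑ l ∈ range d,
            δ k * ε l * (D i j * (if i ≤ k ∧ l ≤ j then (1:ℝ) else 0)) := by
      intro i hi j hj
      rw [Finset.mem_range] at hi hj
      rw [hfrep i hi, hgrep j hj, Finset.sum_mul_sum]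
      rw [Finset.mul_sum]
      refine Finset.sum_congr rfl fun k _ => ?_
      rw [Finset.mul_sum]
      refine Finset.sum_congr rfl fun l _ => ?_
      by_cases h1 : i ≤ k <;> by_cases h2 : l ≤ j <;> (simp [h1, h2]; try ring)
    calc ∑ i ∈ range d, ∑ j ∈ range d, D i j * (f i * g j)
        = ∑ i ∈ range d, ∑ j ∈ range d, ∑ k ∈ range d, ∑ l ∈ range d,
            δ k * ε l * (D i j * (if i ≤ k ∧ l ≤ j then (1:ℝ) else 0)) := by
          refine Finset.sum_congr rfl fun i hi => Finset.sum_congr rfl fun j hj => ?_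
          exact step i hi j hj
      _ = ∑ i ∈ range d, ∑ k ∈ range d, ∑ j ∈ range d, ∑ l ∈ range d,
            δ k * ε l * (D i j * (if i ≤ k ∧ l ≤ j then (1:ℝ) else 0)) := by
          exact Finset.sum_congr rfl fun i _ => Finset.sum_comm
      _ = ∑ k ∈ range d, ∑ i ∈ range d, ∑ j ∈ range d, ∑ l ∈ range d,
            δ k * ε l * (D i j * (if i ≤ k ∧ l ≤ j then (1:ℝ) else 0)) := by
          exact Finset.sum_comm
      _ = ∑ k ∈ range d, ∑ i ∈ range d, ∑ l ∈ range d, ∑ j ∈ range d,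
            δ k * ε l * (D i j * (if i ≤ k ∧ l ≤ j then (1:ℝ) else 0)) := by
          exact Finset.sum_congr rfl fun k _ => Finset.sum_congr rfl
            fun i _ => Finset.sum_comm
      _ = ∑ k ∈ range d, ∑ l ∈ range d, ∑ i ∈ range d, ∑ j ∈ range d,
            δ k * ε l * (D i j * (if i ≤ k ∧ l ≤ j then (1:ℝ) else 0)) := by
          exact Finset.sum_congr rfl fun k _ => Finset.sum_comm
      _ = ∑ k ∈ range d, ∑ l ∈ range d, δ k * ε l * M k l := by
          refine Finset.sum_congr rfl fun k _ => Finset.sum_congr rfl fun l _ => ?_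
          rw [hM, Finset.mul_sum]
          refine Finset.sum_congr rfl fun i _ => ?_
          rw [Finset.mul_sum]
  -- compare N and M
  have hNM : ∀ k ∈ range d, ∀ l ∈ range d, N k l ≤ M k l := by
    intro k hk l hl
    rw [Finset.mem_range] at hk hl
    have hM0 : 0 ≤ M k l := by
      apply Finset.sum_nonneg; intro i _
      apply Finset.sum_nonneg; intro j _
      by_cases h : i ≤ k ∧ l ≤ j <;> simp [h, hD0 i j]
    have hMge : (k:ℝ) + 1 - l ≤ M k l := by
      have hrowpart : ∀ i, i < d →
          ∑ j ∈ range d, D i j * (if i ≤ k ∧ l ≤ j then (1:ℝ) else 0)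
          = (if i ≤ k then (1:ℝ) - ∑ j ∈ range l, D i j else 0) := by
        intro i hi
        by_cases hik : i ≤ k
        · simp only [hik, true_and, if_true]
          have e1 : ∑ j ∈ range d, D i j * (if l ≤ j then (1:ℝ) else 0)
              = ∑ j ∈ Ico l d, D i j := by
            simp only [mul_ite, mul_one, mul_zero]
            rw [← Finset.sum_filter]
            congr 1
            ext j
            simp [Finset.mem_filter, Finset.mem_Ico, and_comm]
          have e2 : ∑ j ∈ Ico l d, D i j
              = (∑ j ∈ range d, D i j) - ∑ j ∈ range l, D i j :=
            (Finset.sum_Ico_eq_sub _ hl.le)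
          calc ∑ j ∈ range d, D i j * (if l ≤ j then (1:ℝ) else 0)
              = ∑ j ∈ Ico l d, D i j := e1
            _ = (1:ℝ) - ∑ j ∈ range l, D i j := by rw [e2, hrow i hi]
        · simp [hik]
      have hMval : M k l = ∑ i ∈ range (k+1), ((1:ℝ) - ∑ j ∈ range l, D i j) := by
        rw [hM]
        calc ∑ i ∈ range d, ∑ j ∈ range d, D i j * (if i ≤ k ∧ l ≤ j then (1:ℝ) else 0)
            = ∑ i ∈ range d, (if i ≤ k then (1:ℝ) - ∑ j ∈ range l, D i j else 0) :=
              Finset.sum_congr rfl fun i hi => hrowpart i (Finset.mem_range.1 hi)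
          _ = ∑ i ∈ range (k+1), ((1:ℝ) - ∑ j ∈ range l, D i j) := by
              rw [← Finset.sum_filter]
              congr 1
              ext i
              simp [Finset.mem_filter, Nat.lt_succ_iff]
              omega
      rw [hMval, Finset.sum_sub_distrib, Finset.sum_const, Finset.card_range]
      simp only [nsmul_eq_mul, mul_one]
      have hle : ∑ i ∈ range (k+1), ∑ j ∈ range l, D i j
          ≤ ∑ i ∈ range d, ∑ j ∈ range l, D i j := by
        apply Finset.sum_le_sum_of_subset_of_nonneg
        · exact Finset.range_subset_range.2 hk
        · intro i _ _
          exact Finset.sum_nonneg fun j _ => hD0 i j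
      have hcolsum : ∑ i ∈ range d, ∑ j ∈ range l, D i j = l := by
        rw [Finset.sum_comm]
        rw [Finset.sum_congr rfl fun j hj => hcol j (lt_trans (Finset.mem_range.1 hj) hl)]
        simp
      have := hcolsum ▸ hle
      push_cast
      linarith
    by_cases hlk : l ≤ k
    · have hNval : N k l = (k:ℝ) + 1 - l := by
        have hNe : N k l = ∑ i ∈ range d, (if i ≤ k ∧ l ≤ i then (1:ℝ) else 0) := rfl
        rw [hNe]
        rw [Finset.sum_boole]
        have hfil : (range d).filter (fun i => i ≤ k ∧ l ≤ i) = Finset.Icc l k := by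
          ext i
          simp only [Finset.mem_filter, Finset.mem_Icc, Finset.mem_range]
          omega
        rw [hfil, Nat.card_Icc]
        push_cast [Nat.cast_sub (by omega : l ≤ k + 1)]
        ring
      rw [hNval]; exact hMge
    · have hNval : N k l = 0 := by
        rw [hN]
        apply Finset.sum_eq_zero
        intro i _
        have : ¬ (i ≤ k ∧ l ≤ i) := by omega
        simp [this]
      rw [hNval]; exact hM0
  rw [expandL, expandR]
  refine Finset.sum_le_sum fun k hk => Finset.sum_le_sum fun l hl => ?_
  have hkd := Finset.mem_range.1 hk
  have hld := Finset.mem_range.1 hl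
  exact mul_le_mul_of_nonneg_left (hNM k hk l hl)
    (mul_nonneg (hδ0 k hkd) (hε0 l hld))




lemma trace_diag_conj {d : ℕ} (U : Matrix (Fin d) (Fin d) ℝ) (lam beta : Fin d → ℝ) :
    Matrix.trace (Matrix.diagonal lam * (U * Matrix.diagonal beta * Uᵀ))
      = ∑ i : Fin d, ∑ j : Fin d, (U i j)^2 * (lam i * beta j) := by
  rw [Matrix.trace]
  simp only [Matrix.diag_apply, Matrix.mul_apply, Matrix.diagonal_apply,
    Matrix.transpose_apply, ite_mul, zero_mul, mul_ite, mul_zero,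
    Finset.sum_ite_eq, Finset.sum_ite_eq', Finset.mem_univ, if_true]
  refine Finset.sum_congr rfl fun i _ => ?_
  rw [Finset.mul_sum]
  refine Finset.sum_congr rfl fun j _ => ?_
  ring

lemma trace_conj {d : ℕ} (Q1 Q : Matrix (Fin d) (Fin d) ℝ) (lam beta : Fin d → ℝ) :
    Matrix.trace (Q1 * Matrix.diagonal lam * Q1ᵀ * (Q * Matrix.diagonal beta * Qᵀ))
      = ∑ i : Fin d, ∑ j : Fin d, ((Q1ᵀ * Q) i j)^2 * (lam i * beta j) := by
  rw [← trace_diag_conj]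
  have h1 : Q1 * Matrix.diagonal lam * Q1ᵀ * (Q * Matrix.diagonal beta * Qᵀ)
      = Q1 * (Matrix.diagonal lam * (Q1ᵀ * Q * Matrix.diagonal beta * Qᵀ)) := by
    simp only [Matrix.mul_assoc]
  rw [h1, Matrix.trace_mul_comm]
  congr 1
  simp only [Matrix.transpose_mul, Matrix.transpose_transpose, Matrix.mul_assoc]


lemma orth_row_sq {d : ℕ} (U : Matrix (Fin d) (Fin d) ℝ) (h : U * Uᵀ = 1) (i : Fin d) :
    ∑ j : Fin d, (U i j)^2 = 1 := by
  have := congrFun (congrFun h i) i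
  simp only [Matrix.mul_apply, Matrix.transpose_apply, Matrix.one_apply_eq] at this
  simpa [sq] using this

/-- transfer of ds_key to `Fin d` and a doubly stochastic matrix of squares. -/
lemma fin_key (d : ℕ) (lam beta : Fin d → ℝ) (U : Matrix (Fin d) (Fin d) ℝ)
    (hlam : Antitone lam) (hlam0 : ∀ i, 0 ≤ lam i)
    (hbeta : Monotone beta) (hbeta0 : ∀ i, 0 ≤ beta i)
    (hUU : U * Uᵀ = 1) (hUU' : Uᵀ * U = 1) :
    ∑ i : Fin d, lam i * beta i
      ≤ ∑ i : Fin d, ∑ j : Fin d, (U i j)^2 * (lam i * beta j) := by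
  set fn : ℕ → ℝ := extVal lam with hfn
  set gn : ℕ → ℝ := extVal beta with hgn
  set Dn : ℕ → ℕ → ℝ := fun i j =>
    if hi : i < d then if hj : j < d then (U ⟨i, hi⟩ ⟨j, hj⟩)^2 else 0 else 0 with hDn
  have hfv : ∀ i : Fin d, fn (i : ℕ) = lam i := by
    intro i; simp [hfn, extVal, i.isLt]
  have hgv : ∀ i : Fin d, gn (i : ℕ) = beta i := by
    intro i; simp [hgn, extVal, i.isLt]
  have hDv : ∀ i j : Fin d, Dn (i : ℕ) (j : ℕ) = (U i j)^2 := by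
    intro i j; simp [hDn, i.isLt, j.isLt]
  have key := ds_key d fn gn Dn
    (by intro i j hij hj
        have hi : i < d := lt_of_le_of_lt hij hj
        simp only [hfn, extVal, dif_pos hi, dif_pos hj]
        exact hlam (by exact hij))
    (by intro i hi; simp only [hfn, extVal, dif_pos hi]; exact hlam0 _)
    (by intro i j hij hj
        have hi : i < d := lt_of_le_of_lt hij hj
        simp only [hgn, extVal, dif_pos hi, dif_pos hj]
        exact hbeta (by exact hij))
    (by intro i hi; simp only [hgn, extVal, dif_pos hi]; exact hbeta0 _)
    (by intro i j
        simp only [hDn]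
        split
        · split
          · positivity
          · exact le_rfl
        · exact le_rfl)
    (by intro i hi
        have : ∑ j ∈ range d, Dn i j = ∑ j : Fin d, Dn i (j : ℕ) :=
          (Fin.sum_univ_eq_sum_range (fun j => Dn i j) d).symm
        rw [this]
        have : ∀ j : Fin d, Dn i (j : ℕ) = (U ⟨i, hi⟩ j)^2 := by
          intro j; simp [hDn, hi, j.isLt]
        rw [Finset.sum_congr rfl fun j _ => this j]
        exact orth_row_sq U hUU _)
    (by intro j hj
        have : ∑ i ∈ range d, Dn i j = ∑ i : Fin d, Dn (i : ℕ) j :=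
          (Fin.sum_univ_eq_sum_range (fun i => Dn i j) d).symm
        rw [this]
        have hv : ∀ i : Fin d, Dn (i : ℕ) j = (Uᵀ ⟨j, hj⟩ i)^2 := by
          intro i; simp [hDn, hj, i.isLt, Matrix.transpose_apply]
        rw [Finset.sum_congr rfl fun i _ => hv i]
        have := orth_row_sq Uᵀ (by rw [Matrix.transpose_transpose]; exact hUU') ⟨j, hj⟩
        exact this)
  have eL : ∑ i : Fin d, lam i * beta i = ∑ i ∈ range d, fn i * gn i := by
    rw [← Fin.sum_univ_eq_sum_range (fun i => fn i * gn i) d]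
    exact Finset.sum_congr rfl fun i _ => by rw [hfv, hgv]
  have eR : ∑ i : Fin d, ∑ j : Fin d, (U i j)^2 * (lam i * beta j)
      = ∑ i ∈ range d, ∑ j ∈ range d, Dn i j * (fn i * gn j) := by
    rw [← Fin.sum_univ_eq_sum_range (fun i => ∑ j ∈ range d, Dn i j * (fn i * gn j)) d]
    refine Finset.sum_congr rfl fun i _ => ?_
    rw [← Fin.sum_univ_eq_sum_range (fun j => Dn (i:ℕ) j * (fn (i:ℕ) * gn j)) d]
    refine Finset.sum_congr rfl fun j _ => ?_
    rw [hfv, hgv, hDv]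
  rw [eL, eR]
  exact key

/-- For PSD `Λ` with eigenvalues `β₁ ≤ ⋯ ≤ β_d`,
`min_{X ⪰ 0} { tr^s(X†) + tr(XΛ) } = 2 ∑_{i≤s} √βᵢ`: (a) every PSD `X` whose `s`-th largest
eigenvalue is positive satisfies the inequality, (b) if `Λ ≻ 0` some `X` attains equality. -/
theorem stmt_14 (d s : ℕ) (hs1 : 1 ≤ s) (hsd : s ≤ d)
    (Lam : Matrix (Fin d) (Fin d) ℝ) (beta : Fin d → ℝ)
    (hsort : Monotone beta) (hnn : ∀ i, 0 ≤ beta i)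
    (hdecomp : IsSpectralDecomp Lam beta) :
    (∀ (X : Matrix (Fin d) (Fin d) ℝ) (lam : Fin d → ℝ),
        Antitone lam → (∀ i, 0 ≤ lam i) → IsSpectralDecomp X lam →
        0 < extVal lam (s - 1) →
        2 * ∑ i ∈ Finset.univ.filter (fun i : Fin d => (i : ℕ) < s), Real.sqrt (beta i)
          ≤ (∑ i ∈ Finset.univ.filter (fun i : Fin d => (i : ℕ) < s), 1 / lam i)
            + Matrix.trace (X * Lam)) ∧
    ((∀ i, 0 < beta i) →
      ∃ (X : Matrix (Fin d) (Fin d) ℝ) (lam : Fin d → ℝ),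
        Antitone lam ∧ (∀ i, 0 ≤ lam i) ∧ IsSpectralDecomp X lam ∧
        0 < extVal lam (s - 1) ∧
        (∑ i ∈ Finset.univ.filter (fun i : Fin d => (i : ℕ) < s), 1 / lam i)
            + Matrix.trace (X * Lam)
          = 2 * ∑ i ∈ Finset.univ.filter (fun i : Fin d => (i : ℕ) < s),
              Real.sqrt (beta i)) := by
  obtain ⟨Q, hQ, hL⟩ := hdecomp
  have hQ' : Qᵀ * Q = 1 := mul_eq_one_comm.1 hQ
  have hsd1 : s - 1 < d := by omega
  constructor
  · -- part (a)
    intro X lam hlam hlam0 hXd hpos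
    obtain ⟨Q1, hQ1, hX⟩ := hXd
    have hQ1' : Q1ᵀ * Q1 = 1 := mul_eq_one_comm.1 hQ1
    set U : Matrix (Fin d) (Fin d) ℝ := Q1ᵀ * Q with hU
    have hUU : U * Uᵀ = 1 := by
      rw [hU, Matrix.transpose_mul, Matrix.transpose_transpose]
      calc Q1ᵀ * Q * (Qᵀ * Q1) = Q1ᵀ * (Q * Qᵀ) * Q1 := by
            simp only [Matrix.mul_assoc]
        _ = 1 := by rw [hQ, Matrix.mul_one, hQ1']
    have hUU' : Uᵀ * U = 1 := by
      rw [hU, Matrix.transpose_mul, Matrix.transpose_transpose]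
      calc Qᵀ * Q1 * (Q1ᵀ * Q) = Qᵀ * (Q1 * Q1ᵀ) * Q := by
            simp only [Matrix.mul_assoc]
        _ = 1 := by rw [hQ1, Matrix.mul_one, hQ']
    have htr : Matrix.trace (X * Lam)
        = ∑ i : Fin d, ∑ j : Fin d, (U i j)^2 * (lam i * beta j) := by
      rw [hX, hL]; exact trace_conj Q1 Q lam beta
    have hkey : ∑ i : Fin d, lam i * beta i ≤ Matrix.trace (X * Lam) := by
      rw [htr]; exact fin_key d lam beta U hlam hlam0 hsort hnn hUU hUU'
    have hsub : ∑ i ∈ Finset.univ.filter (fun i : Fin d => (i : ℕ) < s), lam i * beta i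
        ≤ ∑ i : Fin d, lam i * beta i := by
      apply Finset.sum_le_sum_of_subset_of_nonneg (Finset.filter_subset _ _)
      intro i _ _
      exact mul_nonneg (hlam0 i) (hnn i)
    have hpos' : 0 < lam ⟨s - 1, hsd1⟩ := by
      have : extVal lam (s-1) = lam ⟨s-1, hsd1⟩ := dif_pos hsd1
      rwa [this] at hpos
    have hlampos : ∀ i ∈ Finset.univ.filter (fun i : Fin d => (i : ℕ) < s), 0 < lam i := by
      intro i hi
      rw [Finset.mem_filter] at hi
      have hle : i ≤ (⟨s-1, hsd1⟩ : Fin d) := by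
        rw [Fin.le_def]
        simp only
        omega
      exact lt_of_lt_of_le hpos' (hlam hle)
    have hterm : ∀ i ∈ Finset.univ.filter (fun i : Fin d => (i : ℕ) < s),
        2 * Real.sqrt (beta i) ≤ 1 / lam i + lam i * beta i := by
      intro i hi
      have hp := hlampos i hi
      set a := Real.sqrt (beta i) with ha
      have ha2 : a^2 = beta i := Real.sq_sqrt (hnn i)
      have h1 : 1 / lam i * lam i = 1 := one_div_mul_cancel hp.ne'
      rw [← ha2]
      nlinarith [sq_nonneg (lam i * a - 1), hp, h1]
    calc 2 * ∑ i ∈ Finset.univ.filter (fun i : Fin d => (i : ℕ) < s), Real.sqrt (beta i)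
        = ∑ i ∈ Finset.univ.filter (fun i : Fin d => (i : ℕ) < s),
            2 * Real.sqrt (beta i) := by rw [Finset.mul_sum]
      _ ≤ ∑ i ∈ Finset.univ.filter (fun i : Fin d => (i : ℕ) < s),
            (1 / lam i + lam i * beta i) := Finset.sum_le_sum hterm
      _ = (∑ i ∈ Finset.univ.filter (fun i : Fin d => (i : ℕ) < s), 1 / lam i)
            + ∑ i ∈ Finset.univ.filter (fun i : Fin d => (i : ℕ) < s), lam i * beta i :=
          Finset.sum_add_distrib
      _ ≤ (∑ i ∈ Finset.univ.filter (fun i : Fin d => (i : ℕ) < s), 1 / lam i)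
            + Matrix.trace (X * Lam) := by
          have := le_trans hsub hkey
          linarith
  · -- part (b)
    intro hbpos
    have hsq : ∀ i, 0 < Real.sqrt (beta i) := fun i => Real.sqrt_pos.2 (hbpos i)
    set gam : Fin d → ℝ := fun i => if (i : ℕ) < s then (Real.sqrt (beta i))⁻¹ else 0
      with hgam
    refine ⟨Q * Matrix.diagonal gam * Qᵀ, gam, ?_, ?_, ⟨Q, hQ, rfl⟩, ?_, ?_⟩
    · -- antitone
      intro i j hij
      simp only [hgam]
      by_cases hj : (j : ℕ) < s
      · have hi : (i : ℕ) < s := lt_of_le_of_lt (by exact_mod_cast hij) hj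
        simp only [hi, hj, if_true]
        exact one_div_le_one_div_of_le (hsq i) (Real.sqrt_le_sqrt (hsort hij)) |>.trans_eq
          (by rw [one_div]) |>.trans_eq' (by rw [one_div])
      · simp only [hj, if_false]
        by_cases hi : (i : ℕ) < s
        · simp only [hi, if_true]
          positivity
        · simp [hi]
    · -- nonneg
      intro i
      simp only [hgam]
      by_cases hi : (i : ℕ) < s
      · simp only [hi, if_true]; positivity
      · simp [hi]
    · -- positivity of extVal
      have h1 : extVal gam (s-1) = gam ⟨s-1, hsd1⟩ := dif_pos hsd1
      rw [h1, hgam]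
      simp only
      have : ((⟨s-1, hsd1⟩ : Fin d) : ℕ) < s := by simp; omega
      rw [if_pos this]
      exact inv_pos.2 (hsq _)
    · -- equality
      have htr : Matrix.trace (Q * Matrix.diagonal gam * Qᵀ * Lam)
          = ∑ i : Fin d, gam i * beta i := by
        rw [hL, trace_conj Q Q gam beta, hQ']
        refine Finset.sum_congr rfl fun i _ => ?_
        rw [Finset.sum_eq_single i]
        · simp [Matrix.one_apply]
        · intro j _ hji
          simp [Matrix.one_apply, (Ne.symm hji)]
        · intro h; exact absurd (Finset.mem_univ i) h
      have hsum1 : ∑ i ∈ Finset.univ.filter (fun i : Fin d => (i : ℕ) < s), 1 / gam i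
          = ∑ i ∈ Finset.univ.filter (fun i : Fin d => (i : ℕ) < s), Real.sqrt (beta i) := by
        refine Finset.sum_congr rfl fun i hi => ?_
        rw [Finset.mem_filter] at hi
        simp only [hgam, hi.2, if_true]
        rw [one_div, inv_inv]
      have hsum2 : ∑ i : Fin d, gam i * beta i
          = ∑ i ∈ Finset.univ.filter (fun i : Fin d => (i : ℕ) < s), Real.sqrt (beta i) := by
        rw [← Finset.sum_filter_add_sum_filter_not Finset.univ
          (fun i : Fin d => (i : ℕ) < s) (fun i => gam i * beta i)]
        have e1 : ∑ i ∈ Finset.univ.filter (fun i : Fin d => ¬ (i : ℕ) < s),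
            gam i * beta i = 0 := by
          apply Finset.sum_eq_zero
          intro i hi
          rw [Finset.mem_filter] at hi
          simp [hgam, hi.2]
        rw [e1, add_zero]
        refine Finset.sum_congr rfl fun i hi => ?_
        rw [Finset.mem_filter] at hi
        simp only [hgam, hi.2, if_true]
        rw [inv_mul_eq_div, div_eq_iff (hsq i).ne']
        exact (Real.mul_self_sqrt (hnn i)).symm
      rw [htr, hsum1, hsum2]
      ring
end
end

section
/- Let C = VᵀV be an n×n real positive semidefinite matrix, where V is a d×n real matrix with columns v_1,…,v_n, and let s be an integer with 1 ≤ s ≤ d. Suppose Λ is a d×d real symmetric positive semidefinite matrix with eigenvalues β₁ ≤ ⋯ ≤ β_d, ν ∈ ℝ, and μ ∈ ℝⁿ with μ_i ≥ 0 for all i, such that ν + μ_i ≥ v_iᵀ Λ v_i for every i ∈ {1,…,n}. Then for every subset S ⊆ {1,…,n} with |S| = s and C_{S,S} nonsingular, 2 ∑_{i=1}^s √(β_i) − s·ν − ∑_{i=1}^n μ_i ≤ tr(C_{S,S}^{-1}). (Weak duality: the A-MESP Lagrangian dual value z^{LD}_A is a lower bound on the optimal value z*_A = min_{|S|=s} tr(C_{S,S}^{-1}).)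 -/
open Matrix Finset

noncomputable section

lemma card_filter_lt_fin (d s : ℕ) (hsd : s ≤ d) :
    (Finset.univ.filter (fun i : Fin d => (i : ℕ) < s)).card = s := by
  have : Finset.univ.filter (fun i : Fin d => (i : ℕ) < s)
      = (Finset.univ : Finset (Fin s)).image (Fin.castLE hsd) := by
    ext i
    simp only [Finset.mem_filter, Finset.mem_univ, true_and, Finset.mem_image]
    constructor
    · intro h; exact ⟨⟨i.1, h⟩, rfl⟩
    · rintro ⟨j, rfl⟩; exact j.2
  rw [this, Finset.card_image_of_injective _ (Fin.castLE_injective hsd)]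
  simp

lemma sum_mono_diag_bound {d s : ℕ} (hs1 : 1 ≤ s) (hsd : s ≤ d)
    (c m : Fin d → ℝ) (hc : Monotone c)
    (hm0 : ∀ i, 0 ≤ m i) (hm1 : ∀ i, m i ≤ 1)
    (hsum : ∑ i, m i = s) :
    ∑ i ∈ Finset.univ.filter (fun i : Fin d => (i : ℕ) < s), c i ≤ ∑ i, c i * m i := by
  have hsd' : s - 1 < d := by omega
  set t := c ⟨s - 1, hsd'⟩ with ht
  have key : ∀ i : Fin d, 0 ≤ (c i - t) * (m i - if (i:ℕ) < s then 1 else 0) := by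
    intro i
    by_cases h : (i:ℕ) < s
    · simp only [if_pos h]
      have h1 : c i ≤ t := hc (by simp only [Fin.le_def]; omega)
      nlinarith [hm1 i]
    · simp only [if_neg h]
      have h1 : t ≤ c i := hc (by simp only [Fin.le_def]; omega)
      nlinarith [hm0 i]
  have hchi : ∑ i : Fin d, (if (i:ℕ) < s then (1:ℝ) else 0) = s := by
    rw [Finset.sum_boole]
    rw [card_filter_lt_fin d s hsd]
  have hcchi : ∑ i : Fin d, c i * (if (i:ℕ) < s then (1:ℝ) else 0)
      = ∑ i ∈ Finset.univ.filter (fun i : Fin d => (i : ℕ) < s), c i := by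
    rw [Finset.sum_filter]
    congr 1; ext i; by_cases h : (i:ℕ) < s <;> simp [h]
  have h0 : 0 ≤ ∑ i : Fin d, (c i - t) * (m i - if (i:ℕ) < s then 1 else 0) :=
    Finset.sum_nonneg fun i _ => key i
  have hexp : ∑ i : Fin d, (c i - t) * (m i - if (i:ℕ) < s then 1 else 0)
      = ∑ i, c i * m i - (∑ i : Fin d, c i * (if (i:ℕ) < s then (1:ℝ) else 0))
        - t * (∑ i, m i) + t * (∑ i : Fin d, (if (i:ℕ) < s then (1:ℝ) else 0)) := by
    rw [Finset.mul_sum, Finset.mul_sum, ← Finset.sum_sub_distrib, ← Finset.sum_sub_distrib,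
      ← Finset.sum_add_distrib]
    congr 1; ext i; ring
  rw [hexp, hcchi, hsum, hchi] at h0
  linarith

lemma trace_transpose_mul_self_nonneg {k l : Type*} [Fintype k] [Fintype l]
    (A : Matrix k l ℝ) : 0 ≤ Matrix.trace (Aᵀ * A) := by
  rw [Matrix.trace]
  refine Finset.sum_nonneg fun j _ => ?_
  simp only [Matrix.diag_apply, Matrix.mul_apply, Matrix.transpose_apply]
  exact Finset.sum_nonneg fun i _ => mul_self_nonneg _


/-- Weak duality for A-MESP: any feasible `(Λ, ν, μ)` of the A-MESP
Lagrangian dual gives a lower bound on `tr(C_{S,S}⁻¹)` for every size-`s` subset `S` with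
`C_{S,S}` nonsingular. -/
theorem stmt_15 (d n s : ℕ) (hs1 : 1 ≤ s) (hsd : s ≤ d)
    (V : Matrix (Fin d) (Fin n) ℝ)
    (Lam : Matrix (Fin d) (Fin d) ℝ) (beta : Fin d → ℝ)
    (hsort : Monotone beta) (hnn : ∀ i, 0 ≤ beta i)
    (hdecomp : IsSpectralDecomp Lam beta)
    (ν : ℝ) (μ : Fin n → ℝ) (hμ : ∀ i, 0 ≤ μ i)
    (hfeas : ∀ i : Fin n, (fun a => V a i) ⬝ᵥ (Lam *ᵥ fun a => V a i) ≤ ν + μ i)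
    (S : Finset (Fin n)) (hS : S.card = s) (hnonsing : (subSub (Vᵀ * V) S).det ≠ 0) :
    2 * (∑ i ∈ Finset.univ.filter (fun i : Fin d => (i : ℕ) < s), Real.sqrt (beta i))
        - s * ν - ∑ i, μ i
      ≤ Matrix.trace (subSub (Vᵀ * V) S)⁻¹ := by
  classical
  obtain ⟨Q, hQ, hLam⟩ := hdecomp
  have hQ' : Qᵀ * Q = 1 := mul_eq_one_comm.mp hQ
  obtain ⟨W0, hW0⟩ : ∃ W0 : Matrix (Fin d) {i // i ∈ S} ℝ,
      W0 = Matrix.of (fun a b => V a b.1) := ⟨_, rfl⟩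
  obtain ⟨G, hG⟩ : ∃ G : Matrix {i // i ∈ S} {i // i ∈ S} ℝ, G = subSub (Vᵀ * V) S := ⟨_, rfl⟩
  obtain ⟨W, hW⟩ : ∃ W : Matrix (Fin d) {i // i ∈ S} ℝ, W = Qᵀ * W0 := ⟨_, rfl⟩
  have hGW0 : G = W0ᵀ * W0 := by
    rw [hG, hW0]
    ext a b
    simp [subSub, Matrix.mul_apply]
  have hGW : G = Wᵀ * W := by
    rw [hW, Matrix.transpose_mul, Matrix.transpose_transpose, Matrix.mul_assoc,
      ← Matrix.mul_assoc Q Qᵀ W0, hQ, Matrix.one_mul, ← hGW0]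
  rw [← hG] at hnonsing ⊢
  have hGdet : IsUnit G.det := isUnit_iff_ne_zero.mpr hnonsing
  have hGinv : G * G⁻¹ = 1 := Matrix.mul_nonsing_inv _ hGdet
  have hinvG : G⁻¹ * G = 1 := Matrix.nonsing_inv_mul _ hGdet
  have hGsym : Gᵀ = G := by rw [hGW0, Matrix.transpose_mul, Matrix.transpose_transpose]
  have hGinvsym : (G⁻¹)ᵀ = G⁻¹ := by rw [Matrix.transpose_nonsing_inv, hGsym]
  obtain ⟨Γ, hΓ⟩ : ∃ Γ : Matrix (Fin d) (Fin d) ℝ,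
      Γ = Matrix.diagonal (fun i => Real.sqrt (beta i)) := ⟨_, rfl⟩
  obtain ⟨D, hD⟩ : ∃ D : Matrix (Fin d) (Fin d) ℝ, D = Matrix.diagonal beta := ⟨_, rfl⟩
  rw [← hD] at hLam
  have hΓΓ : Γ * Γ = D := by
    rw [hΓ, hD, Matrix.diagonal_mul_diagonal]
    exact congrArg Matrix.diagonal (funext fun i => Real.mul_self_sqrt (hnn i))
  obtain ⟨X, hX⟩ : ∃ X : Matrix (Fin d) {i // i ∈ S} ℝ, X = W * G⁻¹ := ⟨_, rfl⟩
  obtain ⟨Y, hY⟩ : ∃ Y : Matrix (Fin d) {i // i ∈ S} ℝ, Y = Γ * W := ⟨_, rfl⟩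
  obtain ⟨M, hM⟩ : ∃ M : Matrix (Fin d) (Fin d) ℝ, M = W * G⁻¹ * Wᵀ := ⟨_, rfl⟩
  -- trace identities
  have hXX : Xᵀ * X = G⁻¹ := by
    rw [hX, Matrix.transpose_mul, hGinvsym, Matrix.mul_assoc, ← Matrix.mul_assoc Wᵀ W G⁻¹,
      ← hGW, ← Matrix.mul_assoc, hinvG, Matrix.one_mul]
  have hYY : Yᵀ * Y = Wᵀ * D * W := by
    rw [hY, Matrix.transpose_mul, hΓ, Matrix.diagonal_transpose, ← hΓ, Matrix.mul_assoc,
      ← Matrix.mul_assoc Γ Γ W, hΓΓ, ← Matrix.mul_assoc]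
  have hXY : Matrix.trace (Xᵀ * Y) = ∑ i, Real.sqrt (beta i) * M i i := by
    have h1 : Xᵀ * Y = (G⁻¹ * Wᵀ) * (Γ * W) := by
      rw [hX, hY, Matrix.transpose_mul, hGinvsym]
    have h2 : Γ * W * (G⁻¹ * Wᵀ) = Γ * M := by
      rw [hM]
      simp only [Matrix.mul_assoc]
    rw [h1, Matrix.trace_mul_comm, h2, Matrix.trace]
    refine Finset.sum_congr rfl fun i _ => ?_
    simp [hΓ, Matrix.diagonal_mul]
  -- Frobenius inequality
  have hfrob : 0 ≤ Matrix.trace G⁻¹ + Matrix.trace (Wᵀ * D * W)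
      - 2 * ∑ i, Real.sqrt (beta i) * M i i := by
    have h0 := trace_transpose_mul_self_nonneg (X - Y)
    have hexp : (X - Y)ᵀ * (X - Y) = Xᵀ * X - Xᵀ * Y - Yᵀ * X + Yᵀ * Y := by
      rw [Matrix.transpose_sub, Matrix.sub_mul, Matrix.mul_sub, Matrix.mul_sub]
      abel
    have htr : Matrix.trace (Yᵀ * X) = Matrix.trace (Xᵀ * Y) := by
      rw [← Matrix.trace_transpose (Yᵀ * X), Matrix.transpose_mul, Matrix.transpose_transpose]
    rw [hexp, Matrix.trace_add, Matrix.trace_sub, Matrix.trace_sub, htr, hXX, hYY, hXY] at h0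
    linarith
  -- properties of M
  have hMsym : Mᵀ = M := by
    rw [hM, Matrix.transpose_mul, Matrix.transpose_mul, Matrix.transpose_transpose, hGinvsym,
      Matrix.mul_assoc]
  have hMM : M * M = M := by
    rw [hM]
    calc W * G⁻¹ * Wᵀ * (W * G⁻¹ * Wᵀ)
        = W * G⁻¹ * (Wᵀ * W) * (G⁻¹ * Wᵀ) := by
          simp only [Matrix.mul_assoc]
      _ = W * (G⁻¹ * G) * (G⁻¹ * Wᵀ) := by rw [← hGW, Matrix.mul_assoc W G⁻¹ G]
      _ = W * G⁻¹ * Wᵀ := by rw [hinvG, Matrix.mul_one, ← Matrix.mul_assoc]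
  have hMdiag_sq : ∀ i, M i i = ∑ j, (M i j) ^ 2 := by
    intro i
    conv_lhs => rw [← hMM]
    rw [Matrix.mul_apply]
    refine Finset.sum_congr rfl fun j _ => ?_
    have hji : M j i = M i j := by
      have := congrFun (congrFun hMsym i) j
      rwa [Matrix.transpose_apply] at this
    rw [hji]; ring
  have hM0 : ∀ i, 0 ≤ M i i := by
    intro i; rw [hMdiag_sq i]
    exact Finset.sum_nonneg fun j _ => sq_nonneg _
  have hM1 : ∀ i, M i i ≤ 1 := by
    intro i
    have h1 : (M i i) ^ 2 ≤ M i i := by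
      conv_rhs => rw [hMdiag_sq i]
      exact Finset.single_le_sum (f := fun j => (M i j) ^ 2)
        (fun j _ => sq_nonneg _) (Finset.mem_univ i)
    nlinarith [hM0 i]
  have hMtr : ∑ i, M i i = (s : ℝ) := by
    have h1 : Matrix.trace M = Matrix.trace (Wᵀ * (W * G⁻¹)) := by
      rw [hM, Matrix.trace_mul_comm]
    have h2 : Wᵀ * (W * G⁻¹) = G * G⁻¹ := by
      rw [← Matrix.mul_assoc, ← hGW]
    have h3 : Matrix.trace M = (s : ℝ) := by
      rw [h1, h2, hGinv, Matrix.trace_one]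
      simp [hS]
    simpa [Matrix.trace] using h3
  -- rearrangement bound
  have hreorder : ∑ i ∈ Finset.univ.filter (fun i : Fin d => (i : ℕ) < s), Real.sqrt (beta i)
      ≤ ∑ i, Real.sqrt (beta i) * M i i :=
    sum_mono_diag_bound hs1 hsd _ _ (fun a b h => Real.sqrt_le_sqrt (hsort h)) hM0 hM1 hMtr
  -- feasibility bound
  have hWD : Wᵀ * D * W = W0ᵀ * Lam * W0 := by
    rw [hW, Matrix.transpose_mul, Matrix.transpose_transpose, hLam]
    simp only [Matrix.mul_assoc]
  have hdiag : ∀ a : {i // i ∈ S},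
      (W0ᵀ * Lam * W0) a a = (fun x => V x a.1) ⬝ᵥ (Lam *ᵥ fun x => V x a.1) := by
    intro a
    simp only [hW0, Matrix.mul_apply, Matrix.transpose_apply, dotProduct, Matrix.mulVec,
      Matrix.of_apply, Finset.sum_mul, Finset.mul_sum]
    rw [Finset.sum_comm]
    refine Finset.sum_congr rfl fun j _ => Finset.sum_congr rfl fun k _ => by ring
  have hfeasS : Matrix.trace (W0ᵀ * Lam * W0) ≤ s * ν + ∑ i, μ i := by
    have h1 : Matrix.trace (W0ᵀ * Lam * W0) = ∑ a : {i // i ∈ S},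
        (fun x => V x a.1) ⬝ᵥ (Lam *ᵥ fun x => V x a.1) := by
      rw [Matrix.trace]
      exact Finset.sum_congr rfl fun a _ => hdiag a
    have h2 : ∑ a : {i // i ∈ S}, ((fun x => V x a.1) ⬝ᵥ (Lam *ᵥ fun x => V x a.1))
        ≤ ∑ a : {i // i ∈ S}, (ν + μ a.1) :=
      Finset.sum_le_sum fun a _ => hfeas a.1
    have h3 : ∑ a : {i // i ∈ S}, (ν + μ a.1) = s * ν + ∑ i ∈ S, μ i := by
      rw [Finset.sum_add_distrib, Finset.sum_const, Finset.sum_coe_sort S μ]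
      simp [hS, mul_comm]
    have h4 : ∑ i ∈ S, μ i ≤ ∑ i, μ i :=
      Finset.sum_le_sum_of_subset_of_nonneg (Finset.subset_univ S) fun i _ _ => hμ i
    rw [h1]
    linarith
  rw [← hWD] at hfeasS
  linarith
end
end
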